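/- arXiv:2512.07298 — 11 statements merged into one kernel-verified Lean document; each statement's English description precedes it below -/
import Mathlib

section
/- For all x, y ∈ ℝ^d and every ε ∈ (0,1]: (1 + γV(x) + γV(y))·ψ_ε(|x−y|) + γ·g(|x−y|)·(−λ_V V(x) − λ_V V(y) + 2C_V) ≤ −[ (c₃/(2(c₁+c₂)))·1_{|x−y|≤l₀} + (γλ_V/(1+2γ))·1_{|x−y|>l₀} ]·ρ(x,y) + (2(c₃ + 2c₂K₁)ε + 2c₂K₂(2ε)^α)·(1 + γV(x) + γV(y)). -/
/-!
On the ball `r = |x - y| ≤ l₀`, since `f(r) ≤ (c₁ + c₂) r` it suffices to show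
`ψ_ε(r) + c₃ r ≤ 2(c₃ + 2c₂K₁)ε + 2c₂K₂(2ε)^α`. For `r ≥ 2ε` we have `h_ε = 1`, and the
concavity term `-2c₂² e^{-c₂ r}` absorbs both the drift term (as `K₁ r + K₂ r^α ≤ c₂ / 2` and
`c₁ ≤ c₂ e^{-c₂ r}`) and `c₃ r ≤ c₃ l₀ = c₂² e^{-c₂ l₀}`; for `r < 2ε` every positive term is
`O(ε + ε^α)`. The Lyapunov drift `γ g (2C_V - λ_V V)` costs at most half of the rate because
`γ ≤ c₃ / (4 C_V (c₁ + c₂))`. Off the ball `g` is constant and `|x - y| > l₀` forces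
`V x + V y > 4 C_V / λ_V`, so the Lyapunov drift alone gives the contraction.
-/

open Real Set Bornology

lemma le_sSup_norm_sub_of_add_le {E : Type*} [SeminormedAddCommGroup E] {V : E → ℝ} {R : ℝ}
    (hV : ∀ x, 0 ≤ V x) (hR : IsBounded {x | V x ≤ R}) {x y : E} (hxy : V x + V y ≤ R) :
    ‖x - y‖ ≤ sSup ((fun p : E × E => ‖p.1 - p.2‖) '' {p | V p.1 + V p.2 ≤ R}) := by
  refine le_csSup ⟨Metric.diam {x | V x ≤ R}, ?_⟩ ⟨(x, y), hxy, rfl⟩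
  rintro _ ⟨p, hp : V p.1 + V p.2 ≤ R, rfl⟩
  show ‖p.1 - p.2‖ ≤ _
  rw [← dist_eq_norm]
  exact Metric.dist_le_diam_of_mem hR (show V p.1 ≤ R by linarith [hV p.2])
    (show V p.2 ≤ R by linarith [hV p.1])

lemma mul_add_one_sub_exp_nonneg {c₁ c₂ r : ℝ} (hc₁ : 0 ≤ c₁) (hc₂ : 0 ≤ c₂) (hr : 0 ≤ r) :
    0 ≤ c₁ * r + 1 - exp (-c₂ * r) := by
  have : exp (-c₂ * r) ≤ 1 := exp_le_one_iff.mpr (by nlinarith)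
  nlinarith [mul_nonneg hc₁ hr]

lemma mul_add_one_sub_exp_le (c₁ c₂ r : ℝ) : c₁ * r + 1 - exp (-c₂ * r) ≤ (c₁ + c₂) * r := by
  linarith [add_one_le_exp (-c₂ * r)]

lemma drift_add_le_zero_of_le {K₁ K₂ α l₀ c₁ c₂ c₃ r : ℝ} (hK₁ : 0 ≤ K₁) (hK₂ : 0 ≤ K₂)
    (hα : 0 ≤ α) (hl₀ : 0 < l₀) (hc₂ : c₂ = 2 * (K₁ * l₀ + K₂ * l₀ ^ α))
    (hc₁ : c₁ = c₂ * exp (-c₂ * l₀)) (hc₃ : c₃ = c₂ ^ 2 * exp (-c₂ * l₀) / l₀)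
    (hr : 0 ≤ r) (hrl : r ≤ l₀) :
    (c₁ + c₂ * exp (-c₂ * r)) * (K₁ * r + K₂ * r ^ α) + 2 * (-(c₂ ^ 2) * exp (-c₂ * r))
      + c₃ * r ≤ 0 := by
  have hc₂0 : 0 ≤ c₂ := by rw [hc₂]; positivity
  have hexp : exp (-c₂ * l₀) ≤ exp (-c₂ * r) := exp_le_exp.mpr (by nlinarith)
  have hc₁r : c₁ ≤ c₂ * exp (-c₂ * r) := hc₁ ▸ mul_le_mul_of_nonneg_left hexp hc₂0
  have hK : K₁ * r + K₂ * r ^ α ≤ c₂ / 2 := by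
    have := rpow_le_rpow hr hrl hα
    rw [hc₂]; nlinarith
  have hdrift : (c₁ + c₂ * exp (-c₂ * r)) * (K₁ * r + K₂ * r ^ α)
      ≤ 2 * (c₂ * exp (-c₂ * r)) * (c₂ / 2) :=
    mul_le_mul (by linarith) hK (by positivity) (by positivity)
  have hc₃r : c₃ * r ≤ c₂ ^ 2 * exp (-c₂ * r) :=
    calc c₃ * r ≤ c₃ * l₀ := mul_le_mul_of_nonneg_left hrl (by rw [hc₃]; positivity)
      _ = c₂ ^ 2 * exp (-c₂ * l₀) := by rw [hc₃]; field_simp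
      _ ≤ c₂ ^ 2 * exp (-c₂ * r) := mul_le_mul_of_nonneg_left hexp (sq_nonneg c₂)
  nlinarith

lemma drift_add_le_of_le_two_mul {K₁ K₂ α c₁ c₂ c₃ ε r : ℝ} (hK₁ : 0 ≤ K₁) (hK₂ : 0 ≤ K₂)
    (hα : 0 ≤ α) (hc₁ : c₁ ≤ c₂) (hc₂ : 0 ≤ c₂) (hc₃ : 0 ≤ c₃) (hr : 0 ≤ r) (hrε : r ≤ 2 * ε)
    (s : ℝ) :
    (c₁ + c₂ * exp (-c₂ * r)) * (K₁ * r + K₂ * r ^ α) + 2 * (-(c₂ ^ 2) * exp (-c₂ * r)) * s ^ 2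
      + c₃ * r ≤ 2 * (c₃ + 2 * c₂ * K₁) * ε + 2 * c₂ * K₂ * (2 * ε) ^ α := by
  have hexp : exp (-c₂ * r) ≤ 1 := exp_le_one_iff.mpr (by nlinarith)
  have hK : K₁ * r + K₂ * r ^ α ≤ K₁ * (2 * ε) + K₂ * (2 * ε) ^ α := by
    have := rpow_le_rpow hr hrε hα
    nlinarith
  have hdrift : (c₁ + c₂ * exp (-c₂ * r)) * (K₁ * r + K₂ * r ^ α)
      ≤ 2 * c₂ * (K₁ * (2 * ε) + K₂ * (2 * ε) ^ α) :=
    mul_le_mul (by nlinarith) hK (by positivity) (by positivity)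
  have hdiffusion : 0 ≤ c₂ ^ 2 * exp (-c₂ * r) * s ^ 2 := by positivity
  nlinarith

lemma drift_add_rate_mul_profile_le {K₁ K₂ α l₀ c₁ c₂ c₃ ε r : ℝ} (hK₁ : 0 < K₁) (hK₂ : 0 ≤ K₂)
    (hα : 0 ≤ α) (hl₀ : 0 < l₀) (hc₂ : c₂ = 2 * (K₁ * l₀ + K₂ * l₀ ^ α))
    (hc₁ : c₁ = c₂ * exp (-c₂ * l₀)) (hc₃ : c₃ = c₂ ^ 2 * exp (-c₂ * l₀) / l₀) (hε : 0 ≤ ε)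
    {h : ℝ → ℝ} (hh : ∀ r, 2 * ε ≤ r → h r = 1) (hr : 0 ≤ r) (hrl : r ≤ l₀) :
    (c₁ + c₂ * exp (-c₂ * r)) * (K₁ * r + K₂ * r ^ α) + 2 * (-(c₂ ^ 2) * exp (-c₂ * r)) * h r ^ 2
      + 2 * (c₃ / (2 * (c₁ + c₂))) * (c₁ * r + 1 - exp (-c₂ * r))
      ≤ 2 * (c₃ + 2 * c₂ * K₁) * ε + 2 * c₂ * K₂ * (2 * ε) ^ α := by
  have hc₂0 : 0 < c₂ := by rw [hc₂]; positivity
  have hc₁0 : 0 ≤ c₁ := by rw [hc₁]; positivity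
  have hc₃0 : 0 ≤ c₃ := by rw [hc₃]; positivity
  have hprofile : 2 * (c₃ / (2 * (c₁ + c₂))) * (c₁ * r + 1 - exp (-c₂ * r)) ≤ c₃ * r :=
    calc 2 * (c₃ / (2 * (c₁ + c₂))) * (c₁ * r + 1 - exp (-c₂ * r))
        = c₃ / (c₁ + c₂) * (c₁ * r + 1 - exp (-c₂ * r)) := by field_simp
      _ ≤ c₃ / (c₁ + c₂) * ((c₁ + c₂) * r) := by gcongr; exact mul_add_one_sub_exp_le c₁ c₂ r
      _ = c₃ * r := by field_simp
  refine (add_le_add_right hprofile _).trans ?_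
  rcases le_or_gt (2 * ε) r with hfar | hnear
  · rw [hh _ hfar, one_pow, mul_one]
    exact (drift_add_le_zero_of_le hK₁.le hK₂ hα hl₀ hc₂ hc₁ hc₃ hr hrl).trans (by positivity)
  · have hc₁c₂ : c₁ ≤ c₂ := by
      rw [hc₁]
      exact mul_le_of_le_one_right hc₂0.le (exp_le_one_iff.mpr (by nlinarith))
    exact drift_add_le_of_le_two_mul hK₁.le hK₂ hα hc₁c₂ hc₂0.le hc₃0 hr hnear.le _

lemma contraction_of_drift_add_le {S F T ψ E c γ CV : ℝ} (hS : 1 ≤ S) (hF : 0 ≤ F)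
    (hγ : 0 ≤ γ) (hT : T ≤ 2 * CV) (hγc : 2 * CV * γ ≤ c) (hc : 0 ≤ c)
    (hψ : ψ + 2 * c * F ≤ E) :
    S * ψ + γ * F * T ≤ -(c * (F * S)) + E * S := by
  have hdiff : S * ψ ≤ S * (E - 2 * c * F) := mul_le_mul_of_nonneg_left (by linarith) (by linarith)
  have hlyap : γ * F * T ≤ c * F :=
    calc γ * F * T ≤ γ * F * (2 * CV) := mul_le_mul_of_nonneg_left hT (mul_nonneg hγ hF)
      _ = 2 * CV * γ * F := by ring
      _ ≤ c * F := mul_le_mul_of_nonneg_right hγc hF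
  nlinarith [mul_nonneg (mul_nonneg hc hF) (sub_nonneg.mpr hS)]

lemma contraction_of_lyapunov {lamV CV γ a b F E : ℝ} (hlamV : 0 < lamV) (hγ : 0 ≤ γ)
    (ha : 1 ≤ a) (hb : 1 ≤ b) (hab : 4 * CV / lamV < a + b) (hF : 0 ≤ F) (hE : 0 ≤ E) :
    γ * F * (-(lamV * a) - lamV * b + 2 * CV)
      ≤ -(γ * lamV / (1 + 2 * γ) * (F * (1 + γ * a + γ * b))) + E * (1 + γ * a + γ * b) := by
  have hlam : 4 * CV < lamV * (a + b) := by rw [div_lt_iff₀ hlamV] at hab; linarith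
  -- the left side is `-γ (λ_V (a + b) - 2 C_V - λ_V) - γ² (λ_V (a + b) - 4 C_V)`
  have hkey : γ * (-(lamV * a) - lamV * b + 2 * CV) * (1 + 2 * γ) + γ * lamV * (1 + γ * a + γ * b)
      ≤ 0 := by
    nlinarith [mul_nonneg hγ (mul_nonneg hlamV.le (by linarith : (0:ℝ) ≤ a + b - 2)),
      mul_nonneg (mul_nonneg hγ hγ) (by linarith : (0:ℝ) ≤ lamV * (a + b) - 4 * CV)]
  have hrate : γ * (-(lamV * a) - lamV * b + 2 * CV) + γ * lamV / (1 + 2 * γ) * (1 + γ * a + γ * b)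
      ≤ 0 := by
    have h12 : (0:ℝ) < 1 + 2 * γ := by linarith
    have hsplit :
        γ * (-(lamV * a) - lamV * b + 2 * CV) + γ * lamV / (1 + 2 * γ) * (1 + γ * a + γ * b) =
          (γ * (-(lamV * a) - lamV * b + 2 * CV) * (1 + 2 * γ) + γ * lamV * (1 + γ * a + γ * b))
            / (1 + 2 * γ) := by
      field_simp
    rw [hsplit]
    exact div_nonpos_of_nonpos_of_nonneg hkey h12.le
  nlinarith [mul_nonpos_of_nonpos_of_nonneg hrate hF,
    mul_nonneg hE (by positivity : (0:ℝ) ≤ 1 + γ * a + γ * b)]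

theorem stmt_0_general (d : ℕ)
    (V : EuclideanSpace ℝ (Fin d) → ℝ)
    (hV1 : ∀ x, 1 ≤ V x)
    (hVsub : ∀ R > (0:ℝ), IsBounded {x : EuclideanSpace ℝ (Fin d) | V x ≤ R})
    (K₁ K₂ lamV CV LV : ℝ) (hK₁ : 0 < K₁) (hK₂ : 0 < K₂) (hlamV : 0 < lamV)
    (hCV : 0 < CV) (hLV : 0 < LV)
    (α : ℝ) (hα : α ∈ Set.Ioo (0:ℝ) 1) (η : ℝ)
    (l₀ c₁ c₂ c₃ γ : ℝ)
    (hl₀ : l₀ = 1 + sSup ((fun p : EuclideanSpace ℝ (Fin d) × EuclideanSpace ℝ (Fin d) =>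
        ‖p.1 - p.2‖) '' {p | V p.1 + V p.2 ≤ 4 * CV / lamV}))
    (hc₂ : c₂ = 2 * (K₁ * l₀ + K₂ * l₀ ^ α))
    (hc₁ : c₁ = c₂ * Real.exp (-c₂ * l₀))
    (hc₃ : c₃ = c₂ ^ 2 * Real.exp (-c₂ * l₀) / l₀)
    (hγ : γ = min 1 (min (c₃ / (4 * CV * (c₁ + c₂)))
        ((c₃ / (24 * LV * (1 + LV ^ η) * (c₁ + c₂) * (1 + c₂ / c₁))) ^ (1 / (1 - η)))))
    (f g : ℝ → ℝ)
    (hf : ∀ r, f r = c₁ * r + 1 - Real.exp (-c₂ * r))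
    (hg : ∀ r, g r = f (min r l₀))
    (ρ : EuclideanSpace ℝ (Fin d) → EuclideanSpace ℝ (Fin d) → ℝ)
    (hρ : ∀ x y, ρ x y = g ‖x - y‖ * (1 + γ * V x + γ * V y))
    (ε : ℝ) (hε : ε ∈ Set.Ioc (0:ℝ) 1)
    (h : ℝ → ℝ) (hh1 : ∀ r, 2 * ε ≤ r → h r = 1)
    (ψ : ℝ → ℝ)
    (hψ : ∀ r, ψ r = if r ≤ l₀ then
        (c₁ + c₂ * Real.exp (-c₂ * r)) * (K₁ * r + K₂ * r ^ α)
          + 2 * (-(c₂ ^ 2) * Real.exp (-c₂ * r)) * (h r) ^ 2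
      else 0)
    (x y : EuclideanSpace ℝ (Fin d)) :
    (1 + γ * V x + γ * V y) * ψ ‖x - y‖
        + γ * g ‖x - y‖ * (-(lamV * V x) - lamV * V y + 2 * CV)
      ≤ -((if ‖x - y‖ ≤ l₀ then c₃ / (2 * (c₁ + c₂)) else γ * lamV / (1 + 2 * γ)) * ρ x y)
        + (2 * (c₃ + 2 * c₂ * K₁) * ε + 2 * c₂ * K₂ * (2 * ε) ^ α)
          * (1 + γ * V x + γ * V y) := by
  obtain ⟨hα0, -⟩ := hα
  obtain ⟨hε0, -⟩ := hε
  have hl₀1 : 1 ≤ l₀ := by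
    rw [hl₀]
    refine le_add_of_nonneg_right (Real.sSup_nonneg ?_)
    rintro _ ⟨p, -, rfl⟩
    exact norm_nonneg _
  have hl₀0 : 0 < l₀ := by linarith
  have hc₂0 : 0 < c₂ := by rw [hc₂]; positivity
  have hc₁0 : 0 < c₁ := by rw [hc₁]; positivity
  have hc₃0 : 0 < c₃ := by rw [hc₃]; positivity
  have hγ0 : 0 ≤ γ := by rw [hγ]; positivity
  have hE : 0 ≤ 2 * (c₃ + 2 * c₂ * K₁) * ε + 2 * c₂ * K₂ * (2 * ε) ^ α := by positivity
  have hVx := hV1 x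
  have hVy := hV1 y
  have hr0 := norm_nonneg (x - y)
  rw [hρ, hψ, hg]
  set r := ‖x - y‖
  split_ifs with hr
  · rw [min_eq_left hr, hf]
    have hγc : 2 * CV * γ ≤ c₃ / (2 * (c₁ + c₂)) :=
      calc 2 * CV * γ ≤ 2 * CV * (c₃ / (4 * CV * (c₁ + c₂))) := by
            refine mul_le_mul_of_nonneg_left ?_ (by positivity)
            rw [hγ]
            exact (min_le_right _ _).trans (min_le_left _ _)
        _ = c₃ / (2 * (c₁ + c₂)) := by field_simp; ring
    exact contraction_of_drift_add_le (by nlinarith)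
      (mul_add_one_sub_exp_nonneg hc₁0.le hc₂0.le hr0) hγ0 (by nlinarith) hγc (by positivity)
      (drift_add_rate_mul_profile_le hK₁ hK₂.le hα0.le hl₀0 hc₂ hc₁ hc₃ hε0.le hh1 hr0 hr)
  · rw [min_eq_right (not_le.mp hr).le, hf, mul_zero, zero_add]
    have hVxy : 4 * CV / lamV < V x + V y := by
      by_contra! hclose
      have := le_sSup_norm_sub_of_add_le (fun z => by linarith [hV1 z])
        (hVsub _ (by positivity)) hclose
      linarith
    exact contraction_of_lyapunov hlamV hγ0 hVx hVy hVxy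
      (mul_add_one_sub_exp_nonneg hc₁0.le hc₂0.le hl₀0.le) hE

theorem stmt_0 (d : ℕ) (hd : 1 ≤ d)
    (V : EuclideanSpace ℝ (Fin d) → ℝ)
    (hVcont : Continuous V) (hV1 : ∀ x, 1 ≤ V x)
    (hVsub : ∀ R > (0:ℝ), IsBounded {x : EuclideanSpace ℝ (Fin d) | V x ≤ R})
    (K₁ K₂ lamV CV LV : ℝ) (hK₁ : 0 < K₁) (hK₂ : 0 < K₂) (hlamV : 0 < lamV)
    (hCV : 0 < CV) (hLV : 0 < LV)
    (α : ℝ) (hα : α ∈ Set.Ioo (0:ℝ) 1) (η : ℝ) (hη : η ∈ Set.Ico (0:ℝ) 1)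
    (l₀ c₁ c₂ c₃ γ : ℝ)
    (hl₀ : l₀ = 1 + sSup ((fun p : EuclideanSpace ℝ (Fin d) × EuclideanSpace ℝ (Fin d) =>
        ‖p.1 - p.2‖) '' {p | V p.1 + V p.2 ≤ 4 * CV / lamV}))
    (hc₂ : c₂ = 2 * (K₁ * l₀ + K₂ * l₀ ^ α))
    (hc₁ : c₁ = c₂ * Real.exp (-c₂ * l₀))
    (hc₃ : c₃ = c₂ ^ 2 * Real.exp (-c₂ * l₀) / l₀)
    (hγ : γ = min 1 (min (c₃ / (4 * CV * (c₁ + c₂)))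
        ((c₃ / (24 * LV * (1 + LV ^ η) * (c₁ + c₂) * (1 + c₂ / c₁))) ^ (1 / (1 - η)))))
    (f g : ℝ → ℝ)
    (hf : ∀ r, f r = c₁ * r + 1 - Real.exp (-c₂ * r))
    (hg : ∀ r, g r = f (min r l₀))
    (ρ : EuclideanSpace ℝ (Fin d) → EuclideanSpace ℝ (Fin d) → ℝ)
    (hρ : ∀ x y, ρ x y = g ‖x - y‖ * (1 + γ * V x + γ * V y))
    (ε : ℝ) (hε : ε ∈ Set.Ioc (0:ℝ) 1)
    (h : ℝ → ℝ) (hh01 : ∀ r, 0 ≤ r → h r ∈ Set.Icc (0:ℝ) 1)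
    (hh0 : ∀ r, 0 ≤ r → r ≤ ε → h r = 0) (hh1 : ∀ r, 2 * ε ≤ r → h r = 1)
    (ψ : ℝ → ℝ)
    (hψ : ∀ r, ψ r = if r ≤ l₀ then
        (c₁ + c₂ * Real.exp (-c₂ * r)) * (K₁ * r + K₂ * r ^ α)
          + 2 * (-(c₂ ^ 2) * Real.exp (-c₂ * r)) * (h r) ^ 2
      else 0)
    (x y : EuclideanSpace ℝ (Fin d)) :
    (1 + γ * V x + γ * V y) * ψ ‖x - y‖
        + γ * g ‖x - y‖ * (-(lamV * V x) - lamV * V y + 2 * CV)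
      ≤ -((if ‖x - y‖ ≤ l₀ then c₃ / (2 * (c₁ + c₂)) else γ * lamV / (1 + 2 * γ)) * ρ x y)
        + (2 * (c₃ + 2 * c₂ * K₁) * ε + 2 * c₂ * K₂ * (2 * ε) ^ α)
          * (1 + γ * V x + γ * V y) :=
  stmt_0_general d V hV1 hVsub K₁ K₂ lamV CV LV hK₁ hK₂ hlamV hCV hLV α hα η l₀ c₁ c₂ c₃ γ hl₀ hc₂
    hc₁ hc₃ hγ f g hf hg ρ hρ ε hε h hh1 ψ hψ x y
end

section
/- For all x, y ∈ ℝ^d: |∇V(x) − ∇V(y)| ≤ L_V(1 + L_V^η)(1 + V(x)^η + V(y)^η)|x − y|. -/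
open scoped RealInnerProductSpace
open Real Set

/-- The Hilbert–Schmidt norm of a continuous linear map on `EuclideanSpace ℝ (Fin d)`,
computed as the square root of the sum of squared norms of the images of the standard
basis vectors. -/
noncomputable def hsNorm {d : ℕ}
    (A : EuclideanSpace ℝ (Fin d) →L[ℝ] EuclideanSpace ℝ (Fin d)) : ℝ :=
  Real.sqrt (∑ i, ‖A (EuclideanSpace.single i 1)‖ ^ 2)

/-! The mean value inequality bounds `|∇V(x) − ∇V(y)|` by `|x − y|` times the sup of the
operator norm of `∇²V` on the segment `[y, x]`. That norm is at most the Hilbert–Schmidt norm,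
hence at most `L_V (1 + V(z)^η)`, and on the segment `V(z) ≤ L_V (1 + V(x) + V(y))`; since
`t ↦ t^η` is subadditive for `η ∈ [0, 1]`, this gives `V(z)^η ≤ L_V^η (1 + V(x)^η + V(y)^η)`. -/

theorem opNorm_le_hsNorm {d : ℕ}
    (A : EuclideanSpace ℝ (Fin d) →L[ℝ] EuclideanSpace ℝ (Fin d)) : ‖A‖ ≤ hsNorm A := by
  refine A.opNorm_le_bound (Real.sqrt_nonneg _) fun v => ?_
  let b := EuclideanSpace.basisFun (Fin d) ℝ
  calc ‖A v‖ = ‖∑ i, v i • A (b i)‖ := by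
        conv_lhs => rw [← b.sum_repr v]
        simp [b]
    _ ≤ ∑ i, |v i| * ‖A (b i)‖ := (norm_sum_le _ _).trans_eq (by simp [norm_smul])
    _ ≤ √(∑ i, |v i| ^ 2) * √(∑ i, ‖A (b i)‖ ^ 2) := Real.sum_mul_le_sqrt_mul_sqrt _ _ _
    _ = hsNorm A * ‖v‖ := by
        rw [mul_comm, EuclideanSpace.norm_eq]
        simp [hsNorm, b]

theorem one_add_add_rpow_le {a b p : ℝ} (ha : 0 ≤ a) (hb : 0 ≤ b) (hp : 0 ≤ p) (hp1 : p ≤ 1) :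
    (1 + a + b) ^ p ≤ 1 + a ^ p + b ^ p := by
  calc (1 + a + b) ^ p ≤ (1 + a) ^ p + b ^ p := rpow_add_le_add_rpow (by positivity) hb hp hp1
    _ ≤ 1 ^ p + a ^ p + b ^ p := by gcongr; exact rpow_add_le_add_rpow zero_le_one ha hp hp1
    _ = 1 + a ^ p + b ^ p := by rw [one_rpow]

theorem rpow_le_rpow_mul_one_add_add {v L a b p : ℝ} (hv : 0 ≤ v) (hL : 0 ≤ L) (ha : 0 ≤ a)
    (hb : 0 ≤ b) (hp : 0 ≤ p) (hp1 : p ≤ 1) (h : v ≤ L * (1 + a + b)) :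
    v ^ p ≤ L ^ p * (1 + a ^ p + b ^ p) := by
  calc v ^ p ≤ (L * (1 + a + b)) ^ p := rpow_le_rpow hv h hp
    _ = L ^ p * (1 + a + b) ^ p := mul_rpow hL (by positivity)
    _ ≤ L ^ p * (1 + a ^ p + b ^ p) := by gcongr; exact one_add_add_rpow_le ha hb hp hp1

theorem ContDiff.differentiable_gradient {E : Type*} [NormedAddCommGroup E]
    [InnerProductSpace ℝ E] [CompleteSpace E] {f : E → ℝ} {n : WithTop ℕ∞}
    (hf : ContDiff ℝ n f) (hn : 2 ≤ n) : Differentiable ℝ (gradient f) :=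
  (InnerProductSpace.toDual ℝ E).symm.toContinuousLinearEquiv.differentiable.comp
    ((hf.fderiv_right (m := 1) hn).differentiable one_ne_zero)

theorem stmt_2_general (d : ℕ) (LV η : ℝ) (hLV : 0 < LV) (hη : η ∈ Set.Ico (0:ℝ) 1)
    (V : EuclideanSpace ℝ (Fin d) → ℝ) (hV : ContDiff ℝ 2 V) (hV1 : ∀ x, 1 ≤ V x)
    (hHess : ∀ x, hsNorm (fderiv ℝ (gradient V) x) ≤ LV * (1 + V x ^ η))
    (hMix : ∀ x y : EuclideanSpace ℝ (Fin d), ∀ u ∈ Set.Icc (0:ℝ) 1,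
      V (y + u • (x - y)) ≤ LV * (1 + V x + V y))
    (x y : EuclideanSpace ℝ (Fin d)) :
    ‖gradient V x - gradient V y‖
      ≤ LV * (1 + LV ^ η) * (1 + V x ^ η + V y ^ η) * ‖x - y‖ := by
  obtain ⟨hη0, hη1⟩ := hη
  have hV0 : ∀ z, 0 ≤ V z := fun z => zero_le_one.trans (hV1 z)
  set S := 1 + V x ^ η + V y ^ η
  have hS : 1 ≤ S := by linarith [rpow_nonneg (hV0 x) η, rpow_nonneg (hV0 y) η]
  have hHess_segment :
      ∀ z ∈ segment ℝ y x, ‖fderiv ℝ (gradient V) z‖ ≤ LV * (1 + LV ^ η) * S := by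
    rw [segment_eq_image']
    rintro _ ⟨u, hu, rfl⟩
    have hpow := rpow_le_rpow_mul_one_add_add (hV0 _) hLV.le (hV0 x) (hV0 y) hη0 hη1.le
      (hMix x y u hu)
    calc ‖fderiv ℝ (gradient V) (y + u • (x - y))‖
        ≤ hsNorm (fderiv ℝ (gradient V) (y + u • (x - y))) := opNorm_le_hsNorm _
      _ ≤ LV * (1 + V (y + u • (x - y)) ^ η) := hHess _
      _ ≤ LV * (S + LV ^ η * S) := by gcongr
      _ = LV * (1 + LV ^ η) * S := by ring
  simpa using (convex_segment y x).norm_image_sub_le_of_norm_fderiv_le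
    (fun z _ => hV.differentiable_gradient le_rfl z) hHess_segment
    (left_mem_segment ℝ y x) (right_mem_segment ℝ y x)

theorem stmt_2 (d : ℕ) (hd : 1 ≤ d) (LV η : ℝ) (hLV : 0 < LV) (hη : η ∈ Set.Ico (0:ℝ) 1)
    (V : EuclideanSpace ℝ (Fin d) → ℝ) (hV : ContDiff ℝ 2 V) (hV1 : ∀ x, 1 ≤ V x)
    (hHess : ∀ x, hsNorm (fderiv ℝ (gradient V) x) ≤ LV * (1 + V x ^ η))
    (hMix : ∀ x y : EuclideanSpace ℝ (Fin d), ∀ u ∈ Set.Icc (0:ℝ) 1,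
      V (y + u • (x - y)) ≤ LV * (1 + V x + V y))
    (x y : EuclideanSpace ℝ (Fin d)) :
    ‖gradient V x - gradient V y‖
      ≤ LV * (1 + LV ^ η) * (1 + V x ^ η + V y ^ η) * ‖x - y‖ :=
  stmt_2_general d LV η hLV hη V hV hV1 hHess hMix x y
end

section
/- For all r ∈ [0, l₀]: f′(r)(K₁r + K₂r^α) + 2f″(r) ≤ −c₃r, that is, (c₂e^{−c₂r} + c₁)(K₁r + K₂r^α) − 2c₂²e^{−c₂r} ≤ −c₃r. -/
/-! Since `K₁ r + K₂ r ^ α ≤ c₂ / 2` on `[0, l₀]` and `c₁ ≤ c₂ e^{-c₂ r}`, the drift term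
`(c₂ e^{-c₂ r} + c₁)(K₁ r + K₂ r ^ α)` is at most `c₂² e^{-c₂ r}`, half of the diffusion term.
So the left side is at most `-c₂² e^{-c₂ r} ≤ -c₂² e^{-c₂ l₀} = -c₃ l₀ ≤ -c₃ r`. -/

open Real Set

lemma drift_sub_diffusion_le {c g E E₀ : ℝ} (hc : 0 ≤ c) (hg₀ : 0 ≤ g) (hg : g ≤ c / 2)
    (hE₀ : 0 ≤ E₀) (hE : E₀ ≤ E) :
    (c * E + c * E₀) * g - 2 * c ^ 2 * E ≤ -(c ^ 2 * E₀) := by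
  have hcE : 0 ≤ c * E := mul_nonneg hc (hE₀.trans hE)
  have hdrift : (c * E + c * E₀) * g ≤ c ^ 2 * E :=
    calc (c * E + c * E₀) * g ≤ (2 * (c * E)) * g := by
          gcongr; linarith [mul_le_mul_of_nonneg_left hE hc]
      _ ≤ (2 * (c * E)) * (c / 2) := by gcongr
      _ = c ^ 2 * E := by ring
  linarith [mul_le_mul_of_nonneg_left hE (sq_nonneg c)]

lemma linear_add_rpow_le {K₁ K₂ α r l : ℝ} (hK₁ : 0 ≤ K₁) (hK₂ : 0 ≤ K₂) (hα : 0 ≤ α)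
    (hr : 0 ≤ r) (hrl : r ≤ l) :
    K₁ * r + K₂ * r ^ α ≤ K₁ * l + K₂ * l ^ α := by
  gcongr

theorem stmt_4 (K₁ K₂ α l₀ : ℝ) (hK₁ : 0 < K₁) (hK₂ : 0 < K₂)
    (hα : α ∈ Set.Ioo (0:ℝ) 1) (hl₀ : 0 < l₀)
    (c₁ c₂ c₃ : ℝ)
    (hc₂ : c₂ = 2 * (K₁ * l₀ + K₂ * l₀ ^ α))
    (hc₁ : c₁ = c₂ * Real.exp (-c₂ * l₀))
    (hc₃ : c₃ = c₂ ^ 2 * Real.exp (-c₂ * l₀) / l₀) :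
    ∀ r ∈ Set.Icc (0:ℝ) l₀,
      (c₂ * Real.exp (-c₂ * r) + c₁) * (K₁ * r + K₂ * r ^ α)
        - 2 * c₂ ^ 2 * Real.exp (-c₂ * r) ≤ -(c₃ * r) := by
  rintro r ⟨hr₀, hrl⟩
  subst hc₁ hc₃
  have hg₀ : 0 ≤ K₁ * r + K₂ * r ^ α := by positivity
  have hg : K₁ * r + K₂ * r ^ α ≤ c₂ / 2 := by
    linarith [linear_add_rpow_le hK₁.le hK₂.le hα.1.le hr₀ hrl]
  have hc₂₀ : 0 ≤ c₂ := by linarith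
  have hexp : exp (-c₂ * l₀) ≤ exp (-c₂ * r) := exp_le_exp.2 (by nlinarith)
  have hc₃r : c₂ ^ 2 * exp (-c₂ * l₀) / l₀ * r ≤ c₂ ^ 2 * exp (-c₂ * l₀) := by
    rw [div_mul_eq_mul_div, div_le_iff₀ hl₀]
    exact mul_le_mul_of_nonneg_left hrl (by positivity)
  linarith [drift_sub_diffusion_le hc₂₀ hg₀ hg (exp_pos _).le hexp]
end

section
/- For every p > 0 there exist constants λ_V, C_V > 0 (depending on p, d, λ*, C*, L, α) such that ⟨∇V_p(x), b(x)⟩ + (1/2)ΔV_p(x) ≤ −λ_V·V_p(x) + C_V for all x ∈ ℝ^d; moreover one may take λ_V = pλ*/4. -/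
open scoped RealInnerProductSpace
open Real Set

/-!
Write `s = 1 + |x|²`. The sublinear part contributes `⟨x, b₀ x⟩ ≤ L|x| + L|x|^{1+α}`, which is
absorbed into `(λ*/2)|x|²` because `1, 1 + α < 2`; the Laplacian factor is bounded by `d + |p - 2|`.
Hence `⟨∇V_p, b⟩ + ½ΔV_p ≤ p s^{p/2-1}(-(λ*/2) s + K) = -(pλ*/2) s^{p/2} + pK s^{p/2-1}`, and
the last term is at most `(pλ*/4) s^{p/2} + C` since the exponent `p/2 - 1` is below `p/2`.
-/

lemma exists_rpow_le_mul_rpow_add {β γ ε : ℝ} (hβγ : β < γ) (hε : 0 < ε) :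
    ∃ C, 0 < C ∧ ∀ s, 1 ≤ s → s ^ β ≤ ε * s ^ γ + C := by
  set S := max 1 (ε⁻¹ ^ (γ - β)⁻¹)
  have hS : 1 ≤ S := le_max_left _ _
  refine ⟨S ^ |β|, by positivity, fun s hs => ?_⟩
  have hs0 : 0 < s := by linarith
  rcases le_or_gt s S with hsS | hSs
  · calc s ^ β ≤ s ^ |β| := rpow_le_rpow_of_exponent_le hs (le_abs_self β)
      _ ≤ S ^ |β| := rpow_le_rpow hs0.le hsS (abs_nonneg β)
      _ ≤ ε * s ^ γ + S ^ |β| := le_add_of_nonneg_left (by positivity)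
  · have hthreshold : ε⁻¹ ≤ s ^ (γ - β) :=
      calc ε⁻¹ = (ε⁻¹ ^ (γ - β)⁻¹) ^ (γ - β) := by
            rw [← rpow_mul (by positivity), inv_mul_cancel₀ (by linarith), rpow_one]
        _ ≤ s ^ (γ - β) :=
            rpow_le_rpow (by positivity) ((le_max_right _ _).trans hSs.le) (by linarith)
    calc s ^ β = ε⁻¹ * ε * s ^ β := by field_simp
      _ ≤ s ^ (γ - β) * ε * s ^ β := by gcongr
      _ = ε * s ^ γ := by rw [rpow_sub hs0]; field_simp
      _ ≤ ε * s ^ γ + S ^ |β| := le_add_of_nonneg_right (by positivity)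

lemma exists_rpow_le_mul_rpow_add_of_nonneg {β γ ε : ℝ} (hβ : 0 ≤ β) (hβγ : β < γ)
    (hε : 0 < ε) : ∃ C, 0 < C ∧ ∀ r, 0 ≤ r → r ^ β ≤ ε * r ^ γ + C := by
  obtain ⟨C, hC, hbound⟩ := exists_rpow_le_mul_rpow_add hβγ hε
  refine ⟨ε + C, by positivity, fun r hr => ?_⟩
  have hmax : max r 1 ^ γ ≤ r ^ γ + 1 := by
    rcases le_total r 1 with h | h
    · rw [max_eq_right h, one_rpow]
      linarith [rpow_nonneg hr γ]
    · rw [max_eq_left h]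
      linarith
  calc r ^ β ≤ max r 1 ^ β := rpow_le_rpow hr (le_max_left _ _) hβ
    _ ≤ ε * max r 1 ^ γ + C := hbound _ (le_max_right _ _)
    _ ≤ ε * (r ^ γ + 1) + C := by gcongr
    _ = ε * r ^ γ + (ε + C) := by ring

section InnerProductSpace

variable {E : Type*} [NormedAddCommGroup E] [InnerProductSpace ℝ E]

lemma exists_inner_le_of_norm_le_sublinear {f : E → E} {L α ε : ℝ} (hL : 0 < L)
    (hα : α ∈ Ioo (0 : ℝ) 1) (hf : ∀ x, ‖f x‖ ≤ L * (1 + ‖x‖ ^ α)) (hε : 0 < ε) :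
    ∃ C, 0 < C ∧ ∀ x, ⟪x, f x⟫ ≤ ε * ‖x‖ ^ 2 + C := by
  have hε' : 0 < ε / (2 * L) := by positivity
  obtain ⟨C₁, hC₁, hlin⟩ :=
    exists_rpow_le_mul_rpow_add_of_nonneg (β := 1) (γ := 2) zero_le_one one_lt_two hε'
  obtain ⟨C₂, hC₂, hsublin⟩ := exists_rpow_le_mul_rpow_add_of_nonneg (β := 1 + α) (γ := 2)
    (by linarith [hα.1]) (by linarith [hα.2]) hε'
  refine ⟨L * (C₁ + C₂), by positivity, fun x => ?_⟩
  have hx := norm_nonneg x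
  have hpow : ‖x‖ * ‖x‖ ^ α = ‖x‖ ^ (1 + α) := by
    rw [rpow_add' hx (by linarith [hα.1]), rpow_one]
  calc ⟪x, f x⟫ ≤ ‖x‖ * ‖f x‖ := real_inner_le_norm _ _
    _ ≤ ‖x‖ * (L * (1 + ‖x‖ ^ α)) := by gcongr; exact hf x
    _ = L * (‖x‖ ^ (1 : ℝ) + ‖x‖ ^ (1 + α)) := by rw [rpow_one, ← hpow]; ring
    _ ≤ L * (ε / (2 * L) * ‖x‖ ^ (2 : ℝ) + C₁ + (ε / (2 * L) * ‖x‖ ^ (2 : ℝ) + C₂)) := by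
        gcongr
        exacts [hlin _ hx, hsublin _ hx]
    _ = ε * ‖x‖ ^ 2 + L * (C₁ + C₂) := by rw [rpow_two]; field_simp; ring

lemma exists_inner_add_le_of_dissipative {f g : E → E} {L α lam C₀ : ℝ} (hL : 0 < L)
    (hα : α ∈ Ioo (0 : ℝ) 1) (hf : ∀ x, ‖f x‖ ≤ L * (1 + ‖x‖ ^ α)) (hlam : 0 < lam)
    (hC₀ : 0 < C₀) (hg : ∀ x, ⟪x, g x⟫ ≤ -(lam * ‖x‖ ^ 2) + C₀) :
    ∃ K, 0 < K ∧ ∀ x, ⟪x, f x + g x⟫ ≤ -(lam / 2 * (1 + ‖x‖ ^ 2)) + K := by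
  obtain ⟨C, hC, hfx⟩ := exists_inner_le_of_norm_le_sublinear hL hα hf (half_pos hlam)
  refine ⟨C + C₀ + lam / 2, by positivity, fun x => ?_⟩
  rw [inner_add_right]
  linarith [hfx x, hg x]

end InnerProductSpace

lemma mul_sq_div_one_add_sq_le_abs (a r : ℝ) : a * r ^ 2 / (1 + r ^ 2) ≤ |a| := by
  have hfrac₀ : 0 ≤ r ^ 2 / (1 + r ^ 2) := by positivity
  have hfrac₁ : r ^ 2 / (1 + r ^ 2) ≤ 1 := by rw [div_le_one (by positivity)]; linarith
  calc a * r ^ 2 / (1 + r ^ 2) = a * (r ^ 2 / (1 + r ^ 2)) := mul_div_assoc _ _ _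
    _ ≤ |a| * (r ^ 2 / (1 + r ^ 2)) := by gcongr; exact le_abs_self a
    _ ≤ |a| := mul_le_of_le_one_right (abs_nonneg a) hfrac₁

theorem stmt_5_general (d : ℕ)
    (b₀ b₁ b : EuclideanSpace ℝ (Fin d) → EuclideanSpace ℝ (Fin d))
    (hb : ∀ x, b x = b₀ x + b₁ x)
    (lamStar Cstar : ℝ) (hlam : 0 < lamStar) (hCstar : 0 < Cstar)
    (hb₁ : ∀ x, ⟪x, b₁ x⟫ ≤ -(lamStar * ‖x‖ ^ 2) + Cstar)
    (L α : ℝ) (hL : 0 < L) (hα : α ∈ Set.Ioo (0:ℝ) 1)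
    (hb₀ : ∀ x, ‖b₀ x‖ ≤ L * (1 + ‖x‖ ^ α))
    (p : ℝ) (hp : 0 < p) :
    ∃ lamV CV : ℝ, 0 < lamV ∧ 0 < CV ∧ lamV = p * lamStar / 4 ∧
      ∀ x : EuclideanSpace ℝ (Fin d),
        ⟪(p * (1 + ‖x‖ ^ 2) ^ (p / 2 - 1)) • x, b x⟫
          + (1 / 2) * (p * (1 + ‖x‖ ^ 2) ^ (p / 2 - 1)
              * ((d : ℝ) + (p - 2) * ‖x‖ ^ 2 / (1 + ‖x‖ ^ 2)))
        ≤ -(lamV * (1 + ‖x‖ ^ 2) ^ (p / 2)) + CV := by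
  obtain ⟨K, hK, hdrift⟩ := exists_inner_add_le_of_dissipative hL hα hb₀ hlam hCstar hb₁
  set K' := K + ((d : ℝ) + |p - 2|) / 2 with hK'_def
  have hK' : 0 < K' := by positivity
  obtain ⟨C, hC, hpow⟩ := exists_rpow_le_mul_rpow_add (β := p / 2 - 1) (γ := p / 2)
    (by linarith) (show 0 < lamStar / (4 * K') by positivity)
  refine ⟨p * lamStar / 4, p * K' * C, by positivity, by positivity, rfl, fun x => ?_⟩
  set s := 1 + ‖x‖ ^ 2 with hs_def
  have hs : 1 ≤ s := le_add_of_nonneg_right (by positivity)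
  have hbracket : ⟪x, b x⟫ + ((d : ℝ) + (p - 2) * ‖x‖ ^ 2 / s) / 2 ≤ -(lamStar / 2 * s) + K' := by
    rw [hb]
    linarith [hdrift x, mul_sq_div_one_add_sq_le_abs (p - 2) ‖x‖, hK'_def, hs_def]
  have hsplit : s ^ (p / 2 - 1) * s = s ^ (p / 2) := by
    rw [← rpow_add_one (by positivity)]; ring_nf
  calc _ = p * s ^ (p / 2 - 1) * (⟪x, b x⟫ + ((d : ℝ) + (p - 2) * ‖x‖ ^ 2 / s) / 2) := by
          rw [real_inner_smul_left]; ring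
    _ ≤ p * s ^ (p / 2 - 1) * (-(lamStar / 2 * s) + K') := by gcongr
    _ = -(p * lamStar / 2 * s ^ (p / 2)) + p * K' * s ^ (p / 2 - 1) := by rw [← hsplit]; ring
    _ ≤ -(p * lamStar / 2 * s ^ (p / 2)) + p * K' * (lamStar / (4 * K') * s ^ (p / 2) + C) := by
        gcongr; exact hpow s hs
    _ = -(p * lamStar / 4 * s ^ (p / 2)) + p * K' * C := by field_simp; ring

theorem stmt_5 (d : ℕ) (hd : 1 ≤ d)
    (b₀ b₁ b : EuclideanSpace ℝ (Fin d) → EuclideanSpace ℝ (Fin d))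
    (hb : ∀ x, b x = b₀ x + b₁ x)
    (lamStar Cstar : ℝ) (hlam : 0 < lamStar) (hCstar : 0 < Cstar)
    (hb₁ : ∀ x, ⟪x, b₁ x⟫ ≤ -(lamStar * ‖x‖ ^ 2) + Cstar)
    (L α : ℝ) (hL : 0 < L) (hα : α ∈ Set.Ioo (0:ℝ) 1)
    (hb₀ : ∀ x, ‖b₀ x‖ ≤ L * (1 + ‖x‖ ^ α))
    (p : ℝ) (hp : 0 < p) :
    ∃ lamV CV : ℝ, 0 < lamV ∧ 0 < CV ∧ lamV = p * lamStar / 4 ∧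
      ∀ x : EuclideanSpace ℝ (Fin d),
        ⟪(p * (1 + ‖x‖ ^ 2) ^ (p / 2 - 1)) • x, b x⟫
          + (1 / 2) * (p * (1 + ‖x‖ ^ 2) ^ (p / 2 - 1)
              * ((d : ℝ) + (p - 2) * ‖x‖ ^ 2 / (1 + ‖x‖ ^ 2)))
        ≤ -(lamV * (1 + ‖x‖ ^ 2) ^ (p / 2)) + CV :=
  stmt_5_general d b₀ b₁ b hb lamStar Cstar hlam hCstar hb₁ L α hL hα hb₀ p hp
end

section
/- For every δ ∈ (0, 2^{−1/θ}], every β > 0 and every x ∈ ℝ^d: |x − π^{(δ,θ)}(x)| ≤ |x|^{1+β}·(δ^{−θ}/2)^{−β/ℓ₀}; in particular, taking β = ℓ₀/(2θ), one has |x − π^{(δ,θ)}(x)| ≤ 2^{1/(2θ)}·δ^{1/2}·|x|^{1+ℓ₀/(2θ)}. -/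
/- Outside the ball of radius `R = (δ^{-θ}-1)^{1/ℓ₀}` the truncation moves `x` by `‖x‖ - R`, which is at most `‖x‖`;
and since `‖x‖ > R ≥ (δ^{-θ}/2)^{1/ℓ₀}` there, `‖x‖ ≤ ‖x‖^{1+β} (δ^{-θ}/2)^{-β/ℓ₀}`. The condition
`δ ≤ 2^{-1/θ}` is exactly `δ^{-θ} ≥ 2`, which gives `δ^{-θ}/2 ≤ δ^{-θ} - 1`. -/

open Real Set

/- The truncation map `π^{(δ,θ)}(x) = (min(|x|, (δ^{-θ}-1)^{1/ℓ₀})) x/|x|`, with `π(0) = 0`. -/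
open Classical in
noncomputable def truncMap {d : ℕ} (δ θ ℓ₀ : ℝ) (x : EuclideanSpace ℝ (Fin d)) :
    EuclideanSpace ℝ (Fin d) :=
  if x = 0 then 0 else (min ‖x‖ ((δ ^ (-θ) - 1) ^ (1 / ℓ₀))) • ‖x‖⁻¹ • x

lemma norm_sub_truncMap {d : ℕ} {δ θ ℓ₀ : ℝ} (hR : 0 ≤ (δ ^ (-θ) - 1) ^ (1 / ℓ₀))
    (x : EuclideanSpace ℝ (Fin d)) :
    ‖x - truncMap δ θ ℓ₀ x‖ = ‖x‖ - min ‖x‖ ((δ ^ (-θ) - 1) ^ (1 / ℓ₀)) := by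
  rcases eq_or_ne x 0 with rfl | hx
  · simpa [truncMap] using hR
  set m := min ‖x‖ ((δ ^ (-θ) - 1) ^ (1 / ℓ₀))
  have hx0 : 0 < ‖x‖ := norm_pos_iff.mpr hx
  have hm : 0 ≤ 1 - m * ‖x‖⁻¹ := by
    rw [sub_nonneg, mul_inv_le_iff₀ hx0, one_mul]
    exact min_le_left _ _
  calc ‖x - truncMap δ θ ℓ₀ x‖ = ‖(1 - m * ‖x‖⁻¹) • x‖ := by
        rw [truncMap, if_neg hx, sub_smul, one_smul, smul_smul]
    _ = ‖x‖ - m := by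
        rw [norm_smul, Real.norm_of_nonneg hm]
        field_simp

lemma sub_min_le_rpow_mul_rpow_neg {r R S β : ℝ} (hS : 0 < S) (hSR : S ≤ R) (hβ : 0 ≤ β)
    (hr : 0 ≤ r) : r - min r R ≤ r ^ (1 + β) * S ^ (-β) := by
  rcases le_or_gt r R with hrR | hRr
  · rw [min_eq_left hrR, sub_self]
    positivity
  have hr0 : 0 < r := hS.trans_le (hSR.trans hRr.le)
  have hSβ : S ^ β ≤ r ^ β := rpow_le_rpow hS.le (hSR.trans hRr.le) hβ
  calc r - min r R ≤ r := by linarith [le_min hr (hS.le.trans hSR)]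
    _ ≤ r * (r ^ β / S ^ β) :=
        le_mul_of_one_le_right hr ((one_le_div (rpow_pos_of_pos hS β)).mpr hSβ)
    _ = r ^ (1 + β) * S ^ (-β) := by
        rw [rpow_add hr0, rpow_one, rpow_neg hS.le]
        ring

lemma two_le_rpow_neg_of_le_two_rpow {δ θ : ℝ} (hδ : 0 < δ) (hθ : 0 < θ)
    (hδθ : δ ≤ (2 : ℝ) ^ (-(1 / θ))) : 2 ≤ δ ^ (-θ) := by
  calc (2 : ℝ) = ((2 : ℝ) ^ (-(1 / θ))) ^ (-θ) := by
        rw [← rpow_mul zero_le_two, show -(1 / θ) * -θ = 1 by field_simp, rpow_one]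
    _ ≤ δ ^ (-θ) := rpow_le_rpow_of_nonpos hδ hδθ (neg_nonpos.mpr hθ.le)

lemma rpow_neg_div_two_rpow_neg_one_div_two_mul {δ θ : ℝ} (hδ : 0 ≤ δ) (hθ : θ ≠ 0) :
    (δ ^ (-θ) / 2) ^ (-(1 / (2 * θ))) = 2 ^ (1 / (2 * θ)) * δ ^ ((1 : ℝ) / 2) := by
  rw [div_rpow (rpow_nonneg hδ _) zero_le_two, ← rpow_mul hδ, rpow_neg zero_le_two,
    show -θ * -(1 / (2 * θ)) = (1 : ℝ) / 2 by field_simp, div_inv_eq_mul, mul_comm]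

theorem stmt_6_general (d : ℕ) (ℓ₀ θ : ℝ) (hℓ₀ : 0 < ℓ₀)
    (hθ : θ ∈ Set.Ioo (0:ℝ) (1/2))
    (δ : ℝ) (hδ : 0 < δ) (hδ' : δ ≤ (2:ℝ) ^ (-(1/θ))) :
    (∀ β > (0:ℝ), ∀ x : EuclideanSpace ℝ (Fin d),
        ‖x - truncMap δ θ ℓ₀ x‖ ≤ ‖x‖ ^ (1 + β) * (δ ^ (-θ) / 2) ^ (-(β / ℓ₀)))
    ∧ (∀ x : EuclideanSpace ℝ (Fin d),
        ‖x - truncMap δ θ ℓ₀ x‖ ≤ 2 ^ (1 / (2 * θ)) * δ ^ ((1:ℝ)/2) * ‖x‖ ^ (1 + ℓ₀ / (2 * θ))) := by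
  have h2 := two_le_rpow_neg_of_le_two_rpow hδ hθ.1 hδ'
  have hA : 0 < δ ^ (-θ) / 2 := by linarith
  have hAR : (δ ^ (-θ) / 2) ^ (1 / ℓ₀) ≤ (δ ^ (-θ) - 1) ^ (1 / ℓ₀) :=
    rpow_le_rpow hA.le (by linarith) (by positivity)
  have main : ∀ β > (0:ℝ), ∀ x : EuclideanSpace ℝ (Fin d),
      ‖x - truncMap δ θ ℓ₀ x‖ ≤ ‖x‖ ^ (1 + β) * (δ ^ (-θ) / 2) ^ (-(β / ℓ₀)) := by
    intro β hβ x
    rw [norm_sub_truncMap ((rpow_pos_of_pos hA _).le.trans hAR),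
      show -(β / ℓ₀) = 1 / ℓ₀ * -β by ring, rpow_mul hA.le]
    exact sub_min_le_rpow_mul_rpow_neg (rpow_pos_of_pos hA _) hAR hβ.le (norm_nonneg x)
  refine ⟨main, fun x => ?_⟩
  have h := main (ℓ₀ / (2 * θ)) (by positivity [hθ.1]) x
  rw [show ℓ₀ / (2 * θ) / ℓ₀ = 1 / (2 * θ) by field_simp,
    rpow_neg_div_two_rpow_neg_one_div_two_mul hδ.le hθ.1.ne'] at h
  linarith

theorem stmt_6 (d : ℕ) (hd : 1 ≤ d) (ℓ₀ θ : ℝ) (hℓ₀ : 0 < ℓ₀)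
    (hθ : θ ∈ Set.Ioo (0:ℝ) (1/2))
    (δ : ℝ) (hδ : 0 < δ) (hδ' : δ ≤ (2:ℝ) ^ (-(1/θ))) :
    (∀ β > (0:ℝ), ∀ x : EuclideanSpace ℝ (Fin d),
        ‖x - truncMap δ θ ℓ₀ x‖ ≤ ‖x‖ ^ (1 + β) * (δ ^ (-θ) / 2) ^ (-(β / ℓ₀)))
    ∧ (∀ x : EuclideanSpace ℝ (Fin d),
        ‖x - truncMap δ θ ℓ₀ x‖ ≤ 2 ^ (1 / (2 * θ)) * δ ^ ((1:ℝ)/2) * ‖x‖ ^ (1 + ℓ₀ / (2 * θ))) :=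
  stmt_6_general d ℓ₀ θ hℓ₀ hθ δ hδ hδ'
end

section
/- Set δ₀ := min( 2^{−1/θ}, (λ*/(8(2λ* + α + L₀)²))^{1/(1−2θ)} ). There exists a constant C₁ > 0, depending only on λ*, C*, K₂, α, L₀, |b₀(0)|, |b₁(0)| and θ, such that for all δ ∈ (0, δ₀] and all x ∈ ℝ^d: ⟨x, b^{(δ)}(x)⟩ + δ|b^{(δ)}(x)|² ≤ −(λ*/2)|x|² + C₁. -/
/-!
Write `π(x) = x / s` with `s = max 1 (|x| / r)`, where `r = (δ^{-θ} - 1)^{1/ℓ₀} ≥ 1`. The one-sided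
bound on `b₁` at `π(x)` gives `⟨x, b̄₁(π x)⟩ = s ⟨π x, b̄₁(π x)⟩ ≤ (1 + |x|) C*`, and the Hölder part
contributes at most `K₂ |x|^{1+α} + |b₀(0)| |x|`. Since `|π x|^{ℓ₀} ≤ δ^{-θ} - 1`, the drift grows at
most like `(2λ* + α + L₀) δ^{-θ} |x|`, so `δ |b^{(δ)}(x)|² ≤ 2 (2λ* + α + L₀)² δ^{1-2θ} |x|² + const`,
which is `≤ λ*/4 |x|² + const` by the choice of `δ₀`. Absorbing the subquadratic terms by Young's
inequality with weight `λ*/16` each leaves `-(5/8) λ* |x|²` on the right.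
-/

open scoped RealInnerProductSpace
open Real Set

/-- The modified truncated Euler drift
`b^{(δ)}(x) = -λ* x + b₀(x) + (b₁(π^{(δ,θ)}(x)) + λ* π^{(δ,θ)}(x))`. -/
noncomputable def truncDrift {d : ℕ}
    (b₀ b₁ : EuclideanSpace ℝ (Fin d) → EuclideanSpace ℝ (Fin d))
    (lamStar δ θ ℓ₀ : ℝ) (x : EuclideanSpace ℝ (Fin d)) : EuclideanSpace ℝ (Fin d) :=
  -(lamStar • x) + b₀ x + (b₁ (truncMap δ θ ℓ₀ x) + lamStar • truncMap δ θ ℓ₀ x)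

section Young

variable {p q : ℝ}

lemma rpow_le_mul_rpow_add {ε t : ℝ} (hp : 0 < p) (hpq : p < q) (hε : 0 < ε) (ht : 0 ≤ t) :
    t ^ p ≤ ε * t ^ q + ε ^ (-(p / (q - p))) := by
  have hqp : 0 < q - p := sub_pos.2 hpq
  set s : ℝ := ε ^ (-(1 / (q - p))) with hs
  have hs0 : 0 < s := rpow_pos_of_pos hε _
  rcases le_total t s with hts | hst
  · have hsp : s ^ p = ε ^ (-(p / (q - p))) := by
      rw [hs, ← rpow_mul hε.le]
      ring_nf
    linarith [rpow_le_rpow ht hts hp.le, mul_nonneg hε.le (rpow_nonneg ht q)]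
  -- beyond `s`, the factor `t ^ (q - p) ≥ s ^ (q - p) = ε⁻¹` absorbs `t ^ p` into `ε * t ^ q`
  · have ht0 : 0 < t := hs0.trans_le hst
    have hsq : s ^ (q - p) = ε⁻¹ := by
      rw [hs, ← rpow_mul hε.le, show -(1 / (q - p)) * (q - p) = -1 by field_simp, rpow_neg_one]
    have hinv : ε⁻¹ ≤ t ^ (q - p) := hsq ▸ rpow_le_rpow hs0.le hst hqp.le
    have htq : t ^ q = t ^ p * t ^ (q - p) := by rw [← rpow_add ht0]; ring_nf
    have : t ^ p ≤ ε * t ^ q := by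
      rw [htq, mul_left_comm]
      exact le_mul_of_one_le_right (rpow_nonneg ht p)
        (by simpa [hε.ne'] using mul_le_mul_of_nonneg_left hinv hε.le)
    linarith [rpow_nonneg hε.le (-(p / (q - p)))]

lemma exists_mul_rpow_le_mul_rpow_add (K : ℝ) {ε : ℝ} (hp : 0 < p) (hpq : p < q) (hε : 0 < ε) :
    ∃ C ≥ 0, ∀ t ≥ 0, K * t ^ p ≤ ε * t ^ q + C := by
  set a := max K 1
  have ha : 0 < a := lt_max_of_lt_right one_pos
  refine ⟨a * (ε / a) ^ (-(p / (q - p))), by positivity, fun t ht => ?_⟩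
  have hyoung := rpow_le_mul_rpow_add hp hpq (div_pos hε ha) ht
  calc K * t ^ p ≤ a * t ^ p := mul_le_mul_of_nonneg_right (le_max_left K 1) (rpow_nonneg ht p)
    _ ≤ a * (ε / a * t ^ q + (ε / a) ^ (-(p / (q - p)))) := mul_le_mul_of_nonneg_left hyoung ha.le
    _ = ε * t ^ q + a * (ε / a) ^ (-(p / (q - p))) := by field_simp

end Young

lemma two_le_rpow_neg {δ θ : ℝ} (hθ : 0 < θ) (hδ : 0 < δ) (hδθ : δ ≤ 2 ^ (-(1 / θ))) :
    2 ≤ δ ^ (-θ) := by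
  calc (2 : ℝ) = (2 ^ (-(1 / θ))) ^ (-θ) := by
        rw [← rpow_mul zero_le_two, show -(1 / θ) * -θ = 1 by field_simp, rpow_one]
    _ ≤ δ ^ (-θ) := rpow_le_rpow_of_nonpos hδ hδθ (neg_nonpos.2 hθ.le)

lemma mul_rpow_neg_sq_le {δ θ a : ℝ} (hθ : θ < 1 / 2) (hδ : 0 < δ) (ha : 0 ≤ a)
    (hδa : δ ≤ a ^ (1 / (1 - 2 * θ))) : δ * (δ ^ (-θ)) ^ 2 ≤ a := by
  have hθ' : 0 < 1 - 2 * θ := by linarith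
  calc δ * (δ ^ (-θ)) ^ 2 = δ ^ (1 - 2 * θ) := by
        rw [← rpow_natCast, ← rpow_mul hδ.le, ← rpow_one_add' hδ.le (by push_cast; linarith)]
        push_cast
        ring_nf
    _ ≤ (a ^ (1 / (1 - 2 * θ))) ^ (1 - 2 * θ) := rpow_le_rpow hδ.le hδa hθ'.le
    _ = a := by rw [one_div, rpow_inv_rpow ha hθ'.ne']

lemma mul_sq_le_of_le_mul_add {δ a c t B : ℝ} (hδ : 0 ≤ δ) (hδ1 : δ ≤ 1) (ha : 0 ≤ a)
    (h : a ≤ c * t + B) : δ * a ^ 2 ≤ 2 * (δ * c ^ 2) * t ^ 2 + 2 * B ^ 2 := by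
  have hsq : a ^ 2 ≤ 2 * c ^ 2 * t ^ 2 + 2 * B ^ 2 := by
    nlinarith [sq_nonneg (c * t - B)]
  nlinarith [mul_le_mul_of_nonneg_left hsq hδ, sq_nonneg B]

section Truncation

variable {d : ℕ} {δ θ ℓ₀ : ℝ}

lemma norm_truncMap (hr : 0 ≤ (δ ^ (-θ) - 1) ^ (1 / ℓ₀)) (x : EuclideanSpace ℝ (Fin d)) :
    ‖truncMap δ θ ℓ₀ x‖ = min ‖x‖ ((δ ^ (-θ) - 1) ^ (1 / ℓ₀)) := by
  rcases eq_or_ne x 0 with rfl | hx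
  · simp only [truncMap, if_pos, norm_zero]
    exact (min_eq_left hr).symm
  · rw [truncMap, if_neg hx, norm_smul, norm_smul, norm_inv, norm_norm,
      inv_mul_cancel₀ (norm_ne_zero_iff.2 hx), mul_one, norm_of_nonneg (le_min (norm_nonneg x) hr)]

lemma max_one_div_smul_truncMap (hr : 0 < (δ ^ (-θ) - 1) ^ (1 / ℓ₀))
    (x : EuclideanSpace ℝ (Fin d)) :
    max 1 (‖x‖ / (δ ^ (-θ) - 1) ^ (1 / ℓ₀)) • truncMap δ θ ℓ₀ x = x := by
  rcases eq_or_ne x 0 with rfl | hx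
  · simp [truncMap]
  have hx' : 0 < ‖x‖ := norm_pos_iff.2 hx
  rw [truncMap, if_neg hx, smul_smul, smul_smul]
  convert one_smul ℝ x
  rcases le_total ‖x‖ ((δ ^ (-θ) - 1) ^ (1 / ℓ₀)) with h | h
  · rw [max_eq_left ((div_le_one hr).2 h), min_eq_left h]
    field_simp
  · rw [max_eq_right ((one_le_div hr).2 h), min_eq_right h]
    field_simp

end Truncation

section Drift

variable {d : ℕ} {b₀ b₁ : EuclideanSpace ℝ (Fin d) → EuclideanSpace ℝ (Fin d)}
  {lamStar Cstar L₀ δ θ ℓ₀ : ℝ}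

lemma inner_truncDrift_le (hCstar : 0 ≤ Cstar)
    (hdiss : ∀ x, ⟪x, b₁ x⟫ ≤ -(lamStar * ‖x‖ ^ 2) + Cstar)
    (hr : 1 ≤ (δ ^ (-θ) - 1) ^ (1 / ℓ₀)) (x : EuclideanSpace ℝ (Fin d)) :
    ⟪x, truncDrift b₀ b₁ lamStar δ θ ℓ₀ x⟫
      ≤ -(lamStar * ‖x‖ ^ 2) + ‖x‖ * ‖b₀ x‖ + Cstar * (1 + ‖x‖) := by
  set p := truncMap δ θ ℓ₀ x
  set s := max 1 (‖x‖ / (δ ^ (-θ) - 1) ^ (1 / ℓ₀))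
  have hsp : s • p = x := max_one_div_smul_truncMap (one_pos.trans_le hr) x
  have hs : s ≤ 1 + ‖x‖ :=
    max_le (by linarith [norm_nonneg x]) ((div_le_self (norm_nonneg x) hr).trans (by linarith))
  have hp : ⟪p, b₁ p + lamStar • p⟫ ≤ Cstar := by
    rw [inner_add_right, real_inner_smul_right, real_inner_self_eq_norm_sq]
    linarith [hdiss p]
  have hxp : ⟪x, b₁ p + lamStar • p⟫ ≤ Cstar * (1 + ‖x‖) :=
    calc ⟪x, b₁ p + lamStar • p⟫ = s * ⟪p, b₁ p + lamStar • p⟫ := by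
          rw [← real_inner_smul_left, hsp]
      _ ≤ s * Cstar := mul_le_mul_of_nonneg_left hp (zero_le_one.trans (le_max_left _ _))
      _ ≤ Cstar * (1 + ‖x‖) := by nlinarith
  rw [truncDrift, inner_add_right, inner_add_right, inner_neg_right, real_inner_smul_right,
    real_inner_self_eq_norm_sq]
  linarith [real_inner_le_norm x (b₀ x)]

lemma norm_truncDrift_le (hlam : 0 ≤ lamStar) (hL₀ : 0 ≤ L₀) (hℓ₀ : 0 < ℓ₀)
    (hb₁ : ∀ x y, ‖b₁ x - b₁ y‖ ≤ L₀ * (1 + ‖x‖ ^ ℓ₀ + ‖y‖ ^ ℓ₀) * ‖x - y‖)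
    (hδθ : 1 ≤ δ ^ (-θ)) (x : EuclideanSpace ℝ (Fin d)) :
    ‖truncDrift b₀ b₁ lamStar δ θ ℓ₀ x‖
      ≤ (2 * lamStar + L₀ * δ ^ (-θ)) * ‖x‖ + ‖b₀ x‖ + ‖b₁ 0‖ := by
  set p := truncMap δ θ ℓ₀ x
  have hr : 0 ≤ (δ ^ (-θ) - 1) ^ (1 / ℓ₀) := rpow_nonneg (by linarith) _
  have hpx : ‖p‖ ≤ ‖x‖ := (norm_truncMap hr x).trans_le (min_le_left _ _)
  have hpℓ : 1 + ‖p‖ ^ ℓ₀ ≤ δ ^ (-θ) := by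
    have := rpow_le_rpow (norm_nonneg p) ((norm_truncMap hr x).trans_le (min_le_right _ _)) hℓ₀.le
    rw [one_div, rpow_inv_rpow (by linarith) hℓ₀.ne'] at this
    linarith
  have hb₁p : ‖b₁ p‖ ≤ L₀ * δ ^ (-θ) * ‖x‖ + ‖b₁ 0‖ := by
    have hlip := hb₁ p 0
    rw [norm_zero, zero_rpow hℓ₀.ne', add_zero, sub_zero] at hlip
    have : L₀ * (1 + ‖p‖ ^ ℓ₀) * ‖p‖ ≤ L₀ * δ ^ (-θ) * ‖x‖ := by gcongr
    linarith [norm_le_norm_add_norm_sub' (b₁ p) (b₁ 0)]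
  calc ‖truncDrift b₀ b₁ lamStar δ θ ℓ₀ x‖
      ≤ ‖lamStar • x‖ + ‖b₀ x‖ + (‖b₁ p‖ + ‖lamStar • p‖) := by
        rw [truncDrift, ← norm_neg (lamStar • x)]
        exact (norm_add₃_le ..).trans (by gcongr; exact norm_add_le _ _)
    _ ≤ lamStar * ‖x‖ + ‖b₀ x‖ + (L₀ * δ ^ (-θ) * ‖x‖ + ‖b₁ 0‖ + lamStar * ‖x‖) := by
        rw [norm_smul, norm_smul, norm_of_nonneg hlam]
        gcongr
    _ = (2 * lamStar + L₀ * δ ^ (-θ)) * ‖x‖ + ‖b₀ x‖ + ‖b₁ 0‖ := by ring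

lemma mul_norm_truncDrift_sq_le {α C₀ : ℝ} (hlam : 0 < lamStar) (hα : 0 ≤ α) (hL₀ : 0 ≤ L₀)
    (hℓ₀ : 0 < ℓ₀) (hb₁ : ∀ x y, ‖b₁ x - b₁ y‖ ≤ L₀ * (1 + ‖x‖ ^ ℓ₀ + ‖y‖ ^ ℓ₀) * ‖x - y‖)
    (hδ : 0 < δ) (hδ1 : δ ≤ 1) (hδθ : 1 ≤ δ ^ (-θ))
    (hsmall : δ * (δ ^ (-θ)) ^ 2 ≤ lamStar / (8 * (2 * lamStar + α + L₀) ^ 2))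
    {x : EuclideanSpace ℝ (Fin d)} (hb₀x : ‖b₀ x‖ ≤ α * ‖x‖ + C₀) :
    δ * ‖truncDrift b₀ b₁ lamStar δ θ ℓ₀ x‖ ^ 2
      ≤ lamStar / 4 * ‖x‖ ^ 2 + 2 * (C₀ + ‖b₁ 0‖) ^ 2 := by
  set Q := 2 * lamStar + α + L₀
  have hQ : 0 < Q := by positivity
  have hv : ‖truncDrift b₀ b₁ lamStar δ θ ℓ₀ x‖ ≤ Q * δ ^ (-θ) * ‖x‖ + (C₀ + ‖b₁ 0‖) := by
    have := norm_truncDrift_le (b₀ := b₀) hlam.le hL₀ hℓ₀ hb₁ hδθ x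
    nlinarith [mul_nonneg (mul_nonneg (by positivity : 0 ≤ 2 * lamStar + α) (sub_nonneg.2 hδθ))
      (norm_nonneg x)]
  have hQδ : δ * (Q * δ ^ (-θ)) ^ 2 ≤ lamStar / 8 :=
    calc δ * (Q * δ ^ (-θ)) ^ 2 = Q ^ 2 * (δ * (δ ^ (-θ)) ^ 2) := by ring
      _ ≤ Q ^ 2 * (lamStar / (8 * Q ^ 2)) := by gcongr
      _ = lamStar / 8 := by field_simp
  nlinarith [mul_sq_le_of_le_mul_add hδ.le hδ1 (norm_nonneg _) hv, sq_nonneg ‖x‖]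

end Drift

theorem stmt_9_general (K₂ α L₀ θ lamStar Cstar M₀ M₁ : ℝ)
    (hα : α ∈ Set.Ioo (0:ℝ) 1) (hL₀ : 0 < L₀)
    (hθ : θ ∈ Set.Ioo (0:ℝ) (1/2)) (hlam : 0 < lamStar) (hCstar : 0 < Cstar) :
    ∃ C₁ > (0:ℝ), ∀ ℓ₀ > (0:ℝ), ∀ d : ℕ, 1 ≤ d →
      ∀ b₀ b₁ : EuclideanSpace ℝ (Fin d) → EuclideanSpace ℝ (Fin d),
        (∀ x y, ‖b₀ x - b₀ y‖ ≤ K₂ * ‖x - y‖ ^ α) →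
        (∀ x y, ‖b₁ x - b₁ y‖ ≤ L₀ * (1 + ‖x‖ ^ ℓ₀ + ‖y‖ ^ ℓ₀) * ‖x - y‖) →
        (∀ x, ⟪x, b₁ x⟫ ≤ -(lamStar * ‖x‖ ^ 2) + Cstar) →
        ‖b₀ (0 : EuclideanSpace ℝ (Fin d))‖ ≤ M₀ →
        ‖b₁ (0 : EuclideanSpace ℝ (Fin d))‖ ≤ M₁ →
        ∀ δ : ℝ, 0 < δ →
          δ ≤ min ((2:ℝ) ^ (-(1/θ)))
              ((lamStar / (8 * (2 * lamStar + α + L₀) ^ 2)) ^ (1 / (1 - 2 * θ))) →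
          ∀ x : EuclideanSpace ℝ (Fin d),
            ⟪x, truncDrift b₀ b₁ lamStar δ θ ℓ₀ x⟫
                + δ * ‖truncDrift b₀ b₁ lamStar δ θ ℓ₀ x‖ ^ 2
              ≤ -(lamStar / 2 * ‖x‖ ^ 2) + C₁ := by
  obtain ⟨hα0, hα1⟩ := hα
  obtain ⟨hθ0, hθ1⟩ := hθ
  obtain ⟨C₀, hC₀0, hC₀⟩ := exists_mul_rpow_le_mul_rpow_add K₂ hα0 hα1 hα0
  obtain ⟨CY, hCY, hYoung⟩ :=
    exists_mul_rpow_le_mul_rpow_add K₂ (by linarith : 0 < 1 + α) (by linarith : 1 + α < 2)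
      (by positivity : 0 < lamStar / 16)
  obtain ⟨CL, hCL, hLin⟩ := exists_mul_rpow_le_mul_rpow_add (M₀ + Cstar) one_pos one_lt_two
    (by positivity : 0 < lamStar / 16)
  refine ⟨CY + CL + Cstar + 2 * (C₀ + M₀ + M₁) ^ 2, by positivity, ?_⟩
  intro ℓ₀ hℓ₀ d _ b₀ b₁ hb₀ hb₁ hdiss hM₀ hM₁ δ hδ hδle x
  have hδθ : 2 ≤ δ ^ (-θ) := two_le_rpow_neg hθ0 hδ (le_min_iff.1 hδle).1
  have hδ1 : δ ≤ 1 := (le_min_iff.1 hδle).1.trans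
    (rpow_le_one_of_one_le_of_nonpos one_le_two (by simp [hθ0.le]))
  have hb₀x : ‖b₀ x‖ ≤ K₂ * ‖x‖ ^ α + M₀ := by
    linarith [norm_le_norm_add_norm_sub' (b₀ x) (b₀ 0), sub_zero x ▸ hb₀ x 0]
  have hx := norm_nonneg x
  have hdrift := mul_norm_truncDrift_sq_le (C₀ := C₀ + M₀) hlam hα0.le hL₀.le hℓ₀ hb₁ hδ hδ1
    (by linarith) (mul_rpow_neg_sq_le hθ1 hδ (by positivity) (le_min_iff.1 hδle).2)
    (by linarith [rpow_one ‖x‖ ▸ hC₀ ‖x‖ hx])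
  have hinner := inner_truncDrift_le (b₀ := b₀) hCstar.le hdiss
    (one_le_rpow (by linarith) (by positivity) : 1 ≤ (δ ^ (-θ) - 1) ^ (1 / ℓ₀)) x
  have hxb₀ : ‖x‖ * ‖b₀ x‖ ≤ K₂ * ‖x‖ ^ (1 + α) + M₀ * ‖x‖ := by
    rw [rpow_one_add' hx (by linarith)]
    nlinarith [mul_le_mul_of_nonneg_left hb₀x hx]
  have hB : (C₀ + M₀ + ‖b₁ 0‖) ^ 2 ≤ (C₀ + M₀ + M₁) ^ 2 :=
    pow_le_pow_left₀ (by linarith [norm_nonneg (b₀ 0), norm_nonneg (b₁ 0)]) (by linarith) 2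
  have hY : K₂ * ‖x‖ ^ (1 + α) ≤ lamStar / 16 * ‖x‖ ^ 2 + CY := by
    simpa only [rpow_two] using hYoung ‖x‖ hx
  have hL : (M₀ + Cstar) * ‖x‖ ≤ lamStar / 16 * ‖x‖ ^ 2 + CL := by
    simpa only [rpow_one, rpow_two] using hLin ‖x‖ hx
  linarith [mul_nonneg hlam.le (sq_nonneg ‖x‖)]

/-- The constant `C₁` depends only on `λ*, C*, K₂, α, L₀, |b₀(0)|, |b₁(0)|, θ`:
it is chosen before the dimension `d`, the exponent `ℓ₀` and the drifts `b₀, b₁`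
(whose values at `0` are controlled by `M₀, M₁`). -/
theorem stmt_9 (K₂ α L₀ θ lamStar Cstar M₀ M₁ : ℝ)
    (hK₂ : 0 < K₂) (hα : α ∈ Set.Ioo (0:ℝ) 1) (hL₀ : 0 < L₀)
    (hθ : θ ∈ Set.Ioo (0:ℝ) (1/2)) (hlam : 0 < lamStar) (hCstar : 0 < Cstar)
    (hM₀ : 0 ≤ M₀) (hM₁ : 0 ≤ M₁) :
    ∃ C₁ > (0:ℝ), ∀ ℓ₀ > (0:ℝ), ∀ d : ℕ, 1 ≤ d →
      ∀ b₀ b₁ : EuclideanSpace ℝ (Fin d) → EuclideanSpace ℝ (Fin d),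
        (∀ x y, ‖b₀ x - b₀ y‖ ≤ K₂ * ‖x - y‖ ^ α) →
        (∀ x y, ‖b₁ x - b₁ y‖ ≤ L₀ * (1 + ‖x‖ ^ ℓ₀ + ‖y‖ ^ ℓ₀) * ‖x - y‖) →
        (∀ x, ⟪x, b₁ x⟫ ≤ -(lamStar * ‖x‖ ^ 2) + Cstar) →
        ‖b₀ (0 : EuclideanSpace ℝ (Fin d))‖ ≤ M₀ →
        ‖b₁ (0 : EuclideanSpace ℝ (Fin d))‖ ≤ M₁ →
        ∀ δ : ℝ, 0 < δ →
          δ ≤ min ((2:ℝ) ^ (-(1/θ)))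
              ((lamStar / (8 * (2 * lamStar + α + L₀) ^ 2)) ^ (1 / (1 - 2 * θ))) →
          ∀ x : EuclideanSpace ℝ (Fin d),
            ⟪x, truncDrift b₀ b₁ lamStar δ θ ℓ₀ x⟫
                + δ * ‖truncDrift b₀ b₁ lamStar δ θ ℓ₀ x‖ ^ 2
              ≤ -(lamStar / 2 * ‖x‖ ^ 2) + C₁ :=
  stmt_9_general K₂ α L₀ θ lamStar Cstar M₀ M₁ hα hL₀ hθ hlam hCstar
end

section
/- For all δ ∈ (0,1] and all x ∈ ℝ^d: |b^{(δ)}(x)| ≤ |b₀(0)| + |b₁(0)| + K₂(1−α) + (K₂α + 2λ* + √2·L₀·δ^{−θ})|x|. -/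
open scoped RealInnerProductSpace
open Real Set

/-- The modified tamed Euler drift
`b^{(δ)}(x) = b₀(x) - λ* x + (b₁(x) + λ* x)/(1 + δ^{2θ}|x|^{2ℓ₀})^{1/2}`. -/
noncomputable def tamedDrift {d : ℕ}
    (b₀ b₁ : EuclideanSpace ℝ (Fin d) → EuclideanSpace ℝ (Fin d))
    (lamStar δ θ ℓ₀ : ℝ) (x : EuclideanSpace ℝ (Fin d)) : EuclideanSpace ℝ (Fin d) :=
  b₀ x - lamStar • x
    + (((1 + δ ^ (2 * θ) * ‖x‖ ^ (2 * ℓ₀)) ^ ((1:ℝ)/2))⁻¹) • (b₁ x + lamStar • x)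

/-
The Hölder part grows sublinearly: by Young's inequality `r ^ α ≤ (1 - α) + α r`. The
polynomially Lipschitz part grows like `(1 + |x| ^ ℓ₀) |x|`, and the taming factor
`(1 + δ^{2θ} |x|^{2ℓ₀})^{-1/2}` turns `1 + |x| ^ ℓ₀` into at most `√2 δ^{-θ}`: with
`t = δ^θ ≤ 1` and `s = |x| ^ ℓ₀`, one has `t (1 + s) ≤ √(2 (t² + t² s²)) ≤ √2 √(1 + (t s)²)`.
The linear terms `∓ λ* x` contribute at most `2 λ* |x|`, since the taming factor is at most `1`.
-/

section GrowthBounds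

variable {E F : Type*} [SeminormedAddCommGroup E] [SeminormedAddCommGroup F] {f : E → F}

theorem norm_le_of_holder {K α : ℝ} (hK : 0 ≤ K) (hα₀ : 0 ≤ α) (hα₁ : α ≤ 1)
    (hf : ∀ x y, ‖f x - f y‖ ≤ K * ‖x - y‖ ^ α) (x : E) :
    ‖f x‖ ≤ ‖f 0‖ + K * (1 - α) + K * α * ‖x‖ := by
  have young : ‖x‖ ^ α ≤ (1 - α) + α * ‖x‖ := by
    have := rpow_one_add_le_one_add_mul_self (by linarith [norm_nonneg x] : -1 ≤ ‖x‖ - 1)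
      hα₀ hα₁
    rw [add_sub_cancel] at this
    linarith
  calc ‖f x‖ ≤ ‖f 0‖ + ‖f x - f 0‖ := norm_le_norm_add_norm_sub' _ _
    _ ≤ ‖f 0‖ + K * ‖x‖ ^ α := by simpa using hf x 0
    _ ≤ ‖f 0‖ + K * ((1 - α) + α * ‖x‖) := by gcongr
    _ = ‖f 0‖ + K * (1 - α) + K * α * ‖x‖ := by ring

theorem norm_le_of_polyLipschitz {L ℓ : ℝ} (hℓ : ℓ ≠ 0)
    (hf : ∀ x y, ‖f x - f y‖ ≤ L * (1 + ‖x‖ ^ ℓ + ‖y‖ ^ ℓ) * ‖x - y‖) (x : E) :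
    ‖f x‖ ≤ ‖f 0‖ + L * (1 + ‖x‖ ^ ℓ) * ‖x‖ := by
  calc ‖f x‖ ≤ ‖f 0‖ + ‖f x - f 0‖ := norm_le_norm_add_norm_sub' _ _
    _ ≤ ‖f 0‖ + L * (1 + ‖x‖ ^ ℓ) * ‖x‖ := by simpa [zero_rpow hℓ] using hf x 0

end GrowthBounds

section Taming

theorem mul_one_add_le_sqrt_two_mul_sqrt {t : ℝ} (ht₀ : 0 ≤ t) (ht₁ : t ≤ 1) (s : ℝ) :
    t * (1 + s) ≤ √2 * √(1 + (t * s) ^ 2) := by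
  calc t * (1 + s) = t + t * s := by ring
    _ ≤ √(2 * (t ^ 2 + (t * s) ^ 2)) := le_sqrt_of_sq_le add_sq_le
    _ ≤ √(2 * (1 + (t * s) ^ 2)) := by gcongr; exact pow_le_one₀ ht₀ ht₁
    _ = √2 * √(1 + (t * s) ^ 2) := sqrt_mul zero_le_two _

noncomputable def tamingFactor (δ θ ℓ₀ r : ℝ) : ℝ :=
  ((1 + δ ^ (2 * θ) * r ^ (2 * ℓ₀)) ^ ((1:ℝ)/2))⁻¹

variable {δ θ ℓ₀ r : ℝ}

theorem tamingFactor_eq_inv_sqrt (hδ : 0 ≤ δ) (hr : 0 ≤ r) :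
    tamingFactor δ θ ℓ₀ r = (√(1 + (δ ^ θ * r ^ ℓ₀) ^ 2))⁻¹ := by
  rw [tamingFactor, sqrt_eq_rpow, mul_pow, mul_comm 2 θ, mul_comm 2 ℓ₀,
    rpow_mul hδ, rpow_mul hr, rpow_two, rpow_two]

theorem tamingFactor_nonneg (hδ : 0 ≤ δ) (hr : 0 ≤ r) : 0 ≤ tamingFactor δ θ ℓ₀ r := by
  rw [tamingFactor_eq_inv_sqrt hδ hr]
  positivity

theorem tamingFactor_le_one (hδ : 0 ≤ δ) (hr : 0 ≤ r) : tamingFactor δ θ ℓ₀ r ≤ 1 := by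
  rw [tamingFactor_eq_inv_sqrt hδ hr]
  exact inv_le_one_of_one_le₀ (one_le_sqrt.2 (le_add_of_nonneg_right (sq_nonneg _)))

theorem tamingFactor_mul_one_add_rpow_le (hδ₀ : 0 < δ) (hδ₁ : δ ≤ 1) (hθ : 0 ≤ θ)
    (hr : 0 ≤ r) : tamingFactor δ θ ℓ₀ r * (1 + r ^ ℓ₀) ≤ √2 * δ ^ (-θ) := by
  rw [tamingFactor_eq_inv_sqrt hδ₀.le hr, rpow_neg hδ₀.le]
  set t := δ ^ θ
  set s := r ^ ℓ₀
  have ht₀ : 0 < t := rpow_pos_of_pos hδ₀ θ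
  have hsqrt : 0 < √(1 + (t * s) ^ 2) := sqrt_pos.2 (by positivity)
  calc (√(1 + (t * s) ^ 2))⁻¹ * (1 + s) = t * (1 + s) / (t * √(1 + (t * s) ^ 2)) := by
        field_simp
    _ ≤ √2 * √(1 + (t * s) ^ 2) / (t * √(1 + (t * s) ^ 2)) :=
        div_le_div_of_nonneg_right
          (mul_one_add_le_sqrt_two_mul_sqrt ht₀.le (rpow_le_one hδ₀.le hδ₁ hθ) s) (by positivity)
    _ = √2 * t⁻¹ := by field_simp

theorem norm_tamedDrift_le {d : ℕ} (b₀ b₁ : EuclideanSpace ℝ (Fin d) → EuclideanSpace ℝ (Fin d))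
    {lam : ℝ} (hlam : 0 ≤ lam) (hδ : 0 ≤ δ) (x : EuclideanSpace ℝ (Fin d)) :
    ‖tamedDrift b₀ b₁ lam δ θ ℓ₀ x‖
      ≤ ‖b₀ x‖ + lam * ‖x‖ + tamingFactor δ θ ℓ₀ ‖x‖ * (‖b₁ x‖ + lam * ‖x‖) := by
  have hc := tamingFactor_nonneg (θ := θ) (ℓ₀ := ℓ₀) hδ (norm_nonneg x)
  have hsmul : ∀ (a : ℝ) (v : EuclideanSpace ℝ (Fin d)), 0 ≤ a → ‖a • v‖ = a * ‖v‖ :=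
    fun a v ha => by rw [norm_smul, norm_of_nonneg ha]
  change ‖b₀ x - lam • x + tamingFactor δ θ ℓ₀ ‖x‖ • (b₁ x + lam • x)‖ ≤ _
  calc _ ≤ ‖b₀ x - lam • x‖ + ‖tamingFactor δ θ ℓ₀ ‖x‖ • (b₁ x + lam • x)‖ := norm_add_le _ _
    _ ≤ (‖b₀ x‖ + ‖lam • x‖) + tamingFactor δ θ ℓ₀ ‖x‖ * (‖b₁ x‖ + ‖lam • x‖) := by
        rw [hsmul _ _ hc]
        gcongr
        exacts [norm_sub_le _ _, norm_add_le _ _]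
    _ = _ := by rw [hsmul _ _ hlam]

end Taming

theorem stmt_10_general (d : ℕ)
    (b₀ b₁ : EuclideanSpace ℝ (Fin d) → EuclideanSpace ℝ (Fin d))
    (K₂ α : ℝ) (hK₂ : 0 < K₂) (hα : α ∈ Set.Ioo (0:ℝ) 1)
    (hb₀ : ∀ x y, ‖b₀ x - b₀ y‖ ≤ K₂ * ‖x - y‖ ^ α)
    (L₀ ℓ₀ : ℝ) (hL₀ : 0 < L₀) (hℓ₀ : 0 < ℓ₀)
    (hb₁ : ∀ x y, ‖b₁ x - b₁ y‖ ≤ L₀ * (1 + ‖x‖ ^ ℓ₀ + ‖y‖ ^ ℓ₀) * ‖x - y‖)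
    (θ lamStar : ℝ) (hθ : θ ∈ Set.Ioo (0:ℝ) (1/2)) (hlam : 0 < lamStar) :
    ∀ δ ∈ Set.Ioc (0:ℝ) 1, ∀ x : EuclideanSpace ℝ (Fin d),
      ‖tamedDrift b₀ b₁ lamStar δ θ ℓ₀ x‖
        ≤ ‖b₀ (0 : EuclideanSpace ℝ (Fin d))‖ + ‖b₁ (0 : EuclideanSpace ℝ (Fin d))‖
            + K₂ * (1 - α)
          + (K₂ * α + 2 * lamStar + Real.sqrt 2 * L₀ * δ ^ (-θ)) * ‖x‖ := by
  rintro δ ⟨hδ₀, hδ₁⟩ x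
  have hx := norm_nonneg x
  set c := tamingFactor δ θ ℓ₀ ‖x‖
  have hc₀ : 0 ≤ c := tamingFactor_nonneg hδ₀.le hx
  have hc₁ : c ≤ 1 := tamingFactor_le_one hδ₀.le hx
  have hcs : c * (1 + ‖x‖ ^ ℓ₀) ≤ √2 * δ ^ (-θ) :=
    tamingFactor_mul_one_add_rpow_le hδ₀ hδ₁ hθ.1.le hx
  calc ‖tamedDrift b₀ b₁ lamStar δ θ ℓ₀ x‖
      ≤ ‖b₀ x‖ + lamStar * ‖x‖ + c * (‖b₁ x‖ + lamStar * ‖x‖) :=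
        norm_tamedDrift_le b₀ b₁ hlam.le hδ₀.le x
    _ ≤ (‖b₀ 0‖ + K₂ * (1 - α) + K₂ * α * ‖x‖) + lamStar * ‖x‖
          + c * (‖b₁ 0‖ + L₀ * (1 + ‖x‖ ^ ℓ₀) * ‖x‖ + lamStar * ‖x‖) := by
        gcongr
        exacts [norm_le_of_holder hK₂.le hα.1.le hα.2.le hb₀ x,
          norm_le_of_polyLipschitz hℓ₀.ne' hb₁ x]
    _ = ‖b₀ 0‖ + K₂ * (1 - α) + K₂ * α * ‖x‖ + lamStar * ‖x‖
          + c * ‖b₁ 0‖ + c * (1 + ‖x‖ ^ ℓ₀) * (L₀ * ‖x‖) + c * (lamStar * ‖x‖) := by ring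
    _ ≤ ‖b₀ 0‖ + K₂ * (1 - α) + K₂ * α * ‖x‖ + lamStar * ‖x‖
          + 1 * ‖b₁ 0‖ + √2 * δ ^ (-θ) * (L₀ * ‖x‖) + 1 * (lamStar * ‖x‖) := by
        gcongr
    _ = _ := by ring

theorem stmt_10 (d : ℕ) (hd : 1 ≤ d)
    (b₀ b₁ : EuclideanSpace ℝ (Fin d) → EuclideanSpace ℝ (Fin d))
    (K₂ α : ℝ) (hK₂ : 0 < K₂) (hα : α ∈ Set.Ioo (0:ℝ) 1)
    (hb₀ : ∀ x y, ‖b₀ x - b₀ y‖ ≤ K₂ * ‖x - y‖ ^ α)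
    (L₀ ℓ₀ : ℝ) (hL₀ : 0 < L₀) (hℓ₀ : 0 < ℓ₀)
    (hb₁ : ∀ x y, ‖b₁ x - b₁ y‖ ≤ L₀ * (1 + ‖x‖ ^ ℓ₀ + ‖y‖ ^ ℓ₀) * ‖x - y‖)
    (θ lamStar : ℝ) (hθ : θ ∈ Set.Ioo (0:ℝ) (1/2)) (hlam : 0 < lamStar) :
    ∀ δ ∈ Set.Ioc (0:ℝ) 1, ∀ x : EuclideanSpace ℝ (Fin d),
      ‖tamedDrift b₀ b₁ lamStar δ θ ℓ₀ x‖
        ≤ ‖b₀ (0 : EuclideanSpace ℝ (Fin d))‖ + ‖b₁ (0 : EuclideanSpace ℝ (Fin d))‖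
            + K₂ * (1 - α)
          + (K₂ * α + 2 * lamStar + Real.sqrt 2 * L₀ * δ ^ (-θ)) * ‖x‖ :=
  stmt_10_general d b₀ b₁ K₂ α hK₂ hα hb₀ L₀ ℓ₀ hL₀ hℓ₀ hb₁ θ lamStar hθ hlam
end

section
/- For all δ ∈ (0,1] and all x, y ∈ ℝ^d: |b(x) − b^{(δ)}(y)| ≤ K₂|x−y|^α + L₀(1+|x|^{ℓ₀}+|y|^{ℓ₀})|x−y| + (1/2)|y|^{2ℓ₀}·(|b₁(0)| + (λ* + L₀(1+|y|^{ℓ₀}))|y|)·δ^{2θ}. -/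
open scoped RealInnerProductSpace
open Real Set

/-! The taming error is `(1 - (1 + u)^{-1/2}) (b₁ y + λ* y)` with `u = δ^{2θ}|y|^{2ℓ₀}`, and
`1 - (1 + u)^{-1/2} ≤ u / 2`; the remaining two terms of the bound are the Hölder and local
Lipschitz increments of `b₀` and `b₁`, and `|b₁(y)|` is controlled through `b₁(0)`. -/

lemma one_sub_inv_sqrt_one_add_mem_Icc {u : ℝ} (hu : 0 ≤ u) :
    1 - (√(1 + u))⁻¹ ∈ Icc 0 (u / 2) := by
  set s := √(1 + u)
  have hs_one : 1 ≤ s := Real.one_le_sqrt.mpr (by linarith)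
  have hs_sq : s ^ 2 = 1 + u := Real.sq_sqrt (by linarith)
  have hs_pos : 0 < s := by linarith
  constructor
  · linarith [inv_le_one_of_one_le₀ hs_one]
  · -- `1 - 1/s ≤ s - 1 ≤ (s² - 1)/2 = u/2`, both steps being `(s - 1)² ≥ 0`
    have h_inv : s * s⁻¹ = 1 := mul_inv_cancel₀ hs_pos.ne'
    nlinarith [sq_nonneg (s - 1), inv_pos.2 hs_pos]

lemma norm_le_norm_zero_add_of_norm_sub_le {E F : Type*} [SeminormedAddCommGroup E]
    [SeminormedAddCommGroup F] {f : E → F} {L ℓ : ℝ} (hℓ : ℓ ≠ 0)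
    (hf : ∀ x y, ‖f x - f y‖ ≤ L * (1 + ‖x‖ ^ ℓ + ‖y‖ ^ ℓ) * ‖x - y‖) (y : E) :
    ‖f y‖ ≤ ‖f 0‖ + L * (1 + ‖y‖ ^ ℓ) * ‖y‖ := by
  have hy := hf y 0
  rw [norm_zero, Real.zero_rpow hℓ, add_zero, sub_zero] at hy
  calc ‖f y‖ ≤ ‖f 0‖ + ‖f y - f 0‖ := norm_le_norm_add_norm_sub' _ _
    _ ≤ ‖f 0‖ + L * (1 + ‖y‖ ^ ℓ) * ‖y‖ := by gcongr

section TamedDrift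

variable {d : ℕ} (b₀ b₁ : EuclideanSpace ℝ (Fin d) → EuclideanSpace ℝ (Fin d))
  {lamStar δ θ ℓ₀ : ℝ}

lemma tamedDrift_eq (y : EuclideanSpace ℝ (Fin d)) :
    tamedDrift b₀ b₁ lamStar δ θ ℓ₀ y = b₀ y + b₁ y
      - (1 - (√(1 + δ ^ (2 * θ) * ‖y‖ ^ (2 * ℓ₀)))⁻¹) • (b₁ y + lamStar • y) := by
  rw [tamedDrift, ← Real.sqrt_eq_rpow]
  module

lemma norm_add_sub_tamedDrift_le (hδ : 0 ≤ δ) (hlam : 0 ≤ lamStar)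
    (y : EuclideanSpace ℝ (Fin d)) :
    ‖b₀ y + b₁ y - tamedDrift b₀ b₁ lamStar δ θ ℓ₀ y‖
      ≤ (1/2) * ‖y‖ ^ (2 * ℓ₀) * (‖b₁ y‖ + lamStar * ‖y‖) * δ ^ (2 * θ) := by
  have hu : 0 ≤ δ ^ (2 * θ) * ‖y‖ ^ (2 * ℓ₀) := by positivity
  obtain ⟨hc_nonneg, hc_le⟩ := one_sub_inv_sqrt_one_add_mem_Icc hu
  rw [tamedDrift_eq, sub_sub_cancel, norm_smul, Real.norm_of_nonneg hc_nonneg]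
  calc _ ≤ (δ ^ (2 * θ) * ‖y‖ ^ (2 * ℓ₀) / 2) * (‖b₁ y‖ + ‖lamStar • y‖) := by
        gcongr
        exact norm_add_le _ _
    _ = _ := by
        rw [norm_smul, Real.norm_of_nonneg hlam]
        ring

end TamedDrift

theorem stmt_13_general (d : ℕ)
    (b₀ b₁ b : EuclideanSpace ℝ (Fin d) → EuclideanSpace ℝ (Fin d))
    (hb : ∀ x, b x = b₀ x + b₁ x)
    (K₂ α : ℝ)
    (hb₀ : ∀ x y, ‖b₀ x - b₀ y‖ ≤ K₂ * ‖x - y‖ ^ α)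
    (L₀ ℓ₀ : ℝ) (hℓ₀ : 0 < ℓ₀)
    (hb₁ : ∀ x y, ‖b₁ x - b₁ y‖ ≤ L₀ * (1 + ‖x‖ ^ ℓ₀ + ‖y‖ ^ ℓ₀) * ‖x - y‖)
    (θ lamStar : ℝ) (hlam : 0 < lamStar) :
    ∀ δ ∈ Set.Ioc (0:ℝ) 1, ∀ x y : EuclideanSpace ℝ (Fin d),
      ‖b x - tamedDrift b₀ b₁ lamStar δ θ ℓ₀ y‖
        ≤ K₂ * ‖x - y‖ ^ α + L₀ * (1 + ‖x‖ ^ ℓ₀ + ‖y‖ ^ ℓ₀) * ‖x - y‖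
          + (1/2) * ‖y‖ ^ (2 * ℓ₀)
            * (‖b₁ (0 : EuclideanSpace ℝ (Fin d))‖ + (lamStar + L₀ * (1 + ‖y‖ ^ ℓ₀)) * ‖y‖)
            * δ ^ (2 * θ) := by
  intro δ hδ x y
  have hb₁y := norm_le_norm_zero_add_of_norm_sub_le hℓ₀.ne' hb₁ y
  have hsplit : b x - tamedDrift b₀ b₁ lamStar δ θ ℓ₀ y = (b₀ x - b₀ y) + (b₁ x - b₁ y)
      + (b₀ y + b₁ y - tamedDrift b₀ b₁ lamStar δ θ ℓ₀ y) := by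
    rw [hb]
    abel
  rw [hsplit]
  refine norm_add₃_le.trans ?_
  gcongr
  · exact hb₀ x y
  · exact hb₁ x y
  · refine (norm_add_sub_tamedDrift_le b₀ b₁ hδ.1.le hlam.le y).trans ?_
    have hδθ : 0 ≤ δ ^ (2 * θ) := Real.rpow_nonneg hδ.1.le _
    gcongr _ * ?_ * _
    linarith

theorem stmt_13 (d : ℕ) (hd : 1 ≤ d)
    (b₀ b₁ b : EuclideanSpace ℝ (Fin d) → EuclideanSpace ℝ (Fin d))
    (hb : ∀ x, b x = b₀ x + b₁ x)
    (K₂ α : ℝ) (hK₂ : 0 < K₂) (hα : α ∈ Set.Ioo (0:ℝ) 1)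
    (hb₀ : ∀ x y, ‖b₀ x - b₀ y‖ ≤ K₂ * ‖x - y‖ ^ α)
    (L₀ ℓ₀ : ℝ) (hL₀ : 0 < L₀) (hℓ₀ : 0 < ℓ₀)
    (hb₁ : ∀ x y, ‖b₁ x - b₁ y‖ ≤ L₀ * (1 + ‖x‖ ^ ℓ₀ + ‖y‖ ^ ℓ₀) * ‖x - y‖)
    (θ lamStar : ℝ) (hθ : θ ∈ Set.Ioo (0:ℝ) (1/2)) (hlam : 0 < lamStar) :
    ∀ δ ∈ Set.Ioc (0:ℝ) 1, ∀ x y : EuclideanSpace ℝ (Fin d),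
      ‖b x - tamedDrift b₀ b₁ lamStar δ θ ℓ₀ y‖
        ≤ K₂ * ‖x - y‖ ^ α + L₀ * (1 + ‖x‖ ^ ℓ₀ + ‖y‖ ^ ℓ₀) * ‖x - y‖
          + (1/2) * ‖y‖ ^ (2 * ℓ₀)
            * (‖b₁ (0 : EuclideanSpace ℝ (Fin d))‖ + (lamStar + L₀ * (1 + ‖y‖ ^ ℓ₀)) * ‖y‖)
            * δ ^ (2 * θ) :=
  stmt_13_general d b₀ b₁ b hb K₂ α hb₀ L₀ ℓ₀ hℓ₀ hb₁ θ lamStar hlam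
end

section
/- There exist constants β ∈ (0,1], λ_* > 0 and C_* > 0, depending only on a, b, L, λ*_V, C*_V and ℓ₀, such that for every ε > 0, every cutoff h_ε as in the context, and all (x,y), (x′,y′) ∈ ℝ^d×ℝ^d: Θ₁^{ε,β}((x,y),(x′,y′)) ≤ −[ λ_*·1_{r≤ℓ₀} + (2βC*_V/(1 + 4βC*_V/λ*_V))·1_{r>ℓ₀} ]·ρ_β((x,y),(x′,y′)) + C_*·ε·(1 + βV(x,y) + βV(x′,y′)). -/
open Real Set Bornology

/-- Euclidean space `ℝ^d`. -/
abbrev Euc (d : ℕ) := EuclideanSpace ℝ (Fin d)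

/-!
Write `Z = |z|`, `Q = |q|`, so `r = α₀ Z + Q`; the coefficient of `|z|` is exactly `-b`, and
`B = (α₀ + 1) b / γ + L` is that of `|q|`. On `r ≤ ℓ₀` the concave profile contracts: where the
cutoff is on (`Q ≥ 2ε`) the curvature term `2γ² g''` beats the drift because `γ² c₂ = 2 ℓ₀ B`;
where it is off, `Q < 2ε`, so `α₀ Z ≥ r - 2ε` and the drift `-b Z` controls `r`, hence `g(r)`,
up to an `O(ε)` error. The Lyapunov weight then costs at most `2 β C*_V g(r)`, which half of the
rate absorbs once `4 β C*_V ≤ λ`. On `r > ℓ₀` the profile is flat and, by the choice of `ℓ₀`,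
`V + V' > 4 C*_V / λ*_V`, where `λ*_V (V + V') - 2 C*_V` dominates the weight.
-/

open Function

lemma kinetic_drift_coeff_eq {a b L γ α₀ : ℝ} (ha : 0 ≤ a) (hb : 0 < b) (hγ : γ = b / (a + b))
    (hα₀ : α₀ = 2 + (1 / b + 1 / (a + b)) * L) :
    (1 - α₀) * (b / γ - a) + L * (1 + γ) = -b := by
  have hab : a + b ≠ 0 := by positivity
  subst hγ hα₀
  field_simp
  ring

section Profile

variable {c₁ c₂ ℓ₀ R : ℝ}

lemma profile_le_mul (c₁ c₂ R : ℝ) : 1 - exp (-c₂ * R) + c₁ * R ≤ (c₂ + c₁) * R := by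
  have := Real.one_sub_le_exp_neg (c₂ * R)
  rw [← neg_mul] at this
  linarith

lemma profile_nonneg (hc₁ : 0 ≤ c₁) (hc₂ : 0 ≤ c₂) (hR : 0 ≤ R) :
    0 ≤ 1 - exp (-c₂ * R) + c₁ * R := by
  have : exp (-c₂ * R) ≤ 1 := exp_le_one_iff.2 (by nlinarith)
  nlinarith [mul_nonneg hc₁ hR]

lemma profile_le_two (hc₂ : 0 ≤ c₂) (hR : R ≤ ℓ₀) :
    1 - exp (-c₂ * R) + c₂ * exp (-c₂ * ℓ₀) * R ≤ 2 := by
  have hlin : c₂ * exp (-c₂ * ℓ₀) * R ≤ c₂ * ℓ₀ * exp (-(c₂ * ℓ₀)) := by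
    calc c₂ * exp (-c₂ * ℓ₀) * R ≤ c₂ * exp (-c₂ * ℓ₀) * ℓ₀ :=
          mul_le_mul_of_nonneg_left hR (by positivity)
      _ = c₂ * ℓ₀ * exp (-(c₂ * ℓ₀)) := by rw [neg_mul]; ring
  have hmax : c₂ * ℓ₀ * exp (-(c₂ * ℓ₀)) ≤ 1 :=
    (Real.mul_exp_neg_le_exp_neg_one _).trans (exp_le_one_iff.2 (by norm_num))
  linarith [exp_pos (-c₂ * R)]

end Profile

section Drift

variable {b B α₀ γ ℓ₀ c₁ c₂ ε Z Q R H : ℝ}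

lemma drift_le_of_reflection (hb : 0 ≤ b) (hB : 0 ≤ B) (hℓ₀ : 0 ≤ ℓ₀) (hc₂ : 0 ≤ c₂)
    (hγc : γ ^ 2 * c₂ = 2 * ℓ₀ * B) (hc₁ : c₁ = c₂ * exp (-c₂ * ℓ₀))
    (hZ : 0 ≤ Z) (hQ : Q ≤ ℓ₀) (hR : R ≤ ℓ₀) :
    (c₂ * exp (-c₂ * R) + c₁) * (-b * Z + B * Q)
        + 2 * γ ^ 2 * (-(c₂ ^ 2) * exp (-c₂ * R)) * 1 ^ 2
      ≤ -(ℓ₀ * B * c₁) * (1 - exp (-c₂ * R) + c₁ * R) := by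
  have hc₁E : c₁ ≤ c₂ * exp (-c₂ * R) := by
    rw [hc₁]
    exact mul_le_mul_of_nonneg_left (exp_le_exp.2 (by nlinarith)) hc₂
  have hc₁0 : 0 ≤ c₁ := hc₁ ▸ by positivity
  have hF : 1 - exp (-c₂ * R) + c₁ * R ≤ 2 := hc₁ ▸ profile_le_two hc₂ hR
  have hBℓ₀c₁ : 0 ≤ ℓ₀ * B * c₁ := by positivity
  have hcurv : 2 * γ ^ 2 * (-(c₂ ^ 2) * exp (-c₂ * R)) * 1 ^ 2
      = -(4 * ℓ₀ * B * (c₂ * exp (-c₂ * R))) := by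
    linear_combination (-2 * c₂ * exp (-c₂ * R)) * hγc
  have hgrad : (c₂ * exp (-c₂ * R) + c₁) * (-b * Z + B * Q)
      ≤ (c₂ * exp (-c₂ * R) + c₁) * (B * ℓ₀) :=
    mul_le_mul_of_nonneg_left (by nlinarith [mul_nonneg hb hZ, mul_le_mul_of_nonneg_left hQ hB])
      (by positivity)
  nlinarith [mul_le_mul_of_nonneg_left hc₁E (by positivity : 0 ≤ B * ℓ₀),
    mul_le_mul_of_nonneg_left hF hBℓ₀c₁]

lemma drift_le_of_near_diagonal (hb : 0 ≤ b) (hB : 0 ≤ B) (hα₀ : 0 < α₀) (hc₁ : 0 ≤ c₁)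
    (hc₂ : 0 < c₂) (hZ : 0 ≤ Z) (hQ : 0 ≤ Q) (hRZQ : R = α₀ * Z + Q) (hQε : Q ≤ 2 * ε) :
    (c₂ * exp (-c₂ * R) + c₁) * (-b * Z + B * Q)
        + 2 * γ ^ 2 * (-(c₂ ^ 2) * exp (-c₂ * R)) * H ^ 2
      ≤ -(b * c₁ / (α₀ * (c₂ + c₁))) * (1 - exp (-c₂ * R) + c₁ * R)
        + (2 * B * (c₂ + c₁) + 2 * b * c₁ / α₀) * ε := by
  have hR : 0 ≤ R := by rw [hRZQ]; positivity
  have hE : exp (-c₂ * R) ≤ 1 := exp_le_one_iff.2 (by nlinarith)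
  have hcurv : 2 * γ ^ 2 * (-(c₂ ^ 2) * exp (-c₂ * R)) * H ^ 2 ≤ 0 := by
    have : 0 ≤ 2 * γ ^ 2 * c₂ ^ 2 * exp (-c₂ * R) * H ^ 2 := by positivity
    linarith
  have hgrad : (c₂ * exp (-c₂ * R) + c₁) * (-b * Z + B * Q)
      ≤ -(b * c₁ * Z) + (c₂ + c₁) * B * (2 * ε) := by
    nlinarith [mul_nonneg (mul_nonneg hc₂.le (exp_pos (-c₂ * R)).le) (mul_nonneg hb hZ),
      mul_le_mul (by nlinarith : c₂ * exp (-c₂ * R) + c₁ ≤ c₂ + c₁)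
        (mul_le_mul_of_nonneg_left hQε hB) (by positivity) (by positivity)]
  have hZR : -(b * c₁ * Z) ≤ -(b * c₁ / α₀) * R + 2 * b * c₁ / α₀ * ε := by
    have : b * c₁ / α₀ * R = b * c₁ * Z + b * c₁ / α₀ * Q := by rw [hRZQ]; field_simp
    have hQ' := mul_le_mul_of_nonneg_left hQε (by positivity : 0 ≤ b * c₁ / α₀)
    linear_combination hQ' + this
  have hRF : b * c₁ / (α₀ * (c₂ + c₁)) * (1 - exp (-c₂ * R) + c₁ * R) ≤ b * c₁ / α₀ * R := by
    calc _ ≤ b * c₁ / (α₀ * (c₂ + c₁)) * ((c₂ + c₁) * R) :=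
          mul_le_mul_of_nonneg_left (profile_le_mul c₁ c₂ R) (by positivity)
      _ = b * c₁ / α₀ * R := by field_simp
  nlinarith

lemma drift_le (hb : 0 ≤ b) (hB : 0 ≤ B) (hα₀ : 0 < α₀) (hℓ₀ : 0 ≤ ℓ₀) (hc₂ : 0 < c₂)
    (hγc : γ ^ 2 * c₂ = 2 * ℓ₀ * B)
    (hc₁ : c₁ = c₂ * exp (-c₂ * ℓ₀)) (hZ : 0 ≤ Z) (hQ : 0 ≤ Q) (hRZQ : R = α₀ * Z + Q)
    (hR : R ≤ ℓ₀) (hε : 0 ≤ ε) (hH : 2 * ε ≤ Q → H = 1) :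
    (c₂ * exp (-c₂ * R) + c₁) * (-b * Z + B * Q)
        + 2 * γ ^ 2 * (-(c₂ ^ 2) * exp (-c₂ * R)) * H ^ 2
      ≤ -min (ℓ₀ * B * c₁) (b * c₁ / (α₀ * (c₂ + c₁))) * (1 - exp (-c₂ * R) + c₁ * R)
        + (2 * B * (c₂ + c₁) + 2 * b * c₁ / α₀) * ε := by
  have hc₁0 : 0 ≤ c₁ := hc₁ ▸ by positivity
  have hF := profile_nonneg hc₁0 hc₂.le (by rw [hRZQ]; positivity : 0 ≤ R)
  rcases le_or_gt (2 * ε) Q with hQε | hQε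
  · have hbound := drift_le_of_reflection hb hB hℓ₀ hc₂.le hγc hc₁ hZ
      (by nlinarith [mul_nonneg hα₀.le hZ] : Q ≤ ℓ₀) hR
    rw [hH hQε]
    nlinarith [mul_le_mul_of_nonneg_right
        (min_le_left (ℓ₀ * B * c₁) (b * c₁ / (α₀ * (c₂ + c₁)))) hF,
      (by positivity : 0 ≤ (2 * B * (c₂ + c₁) + 2 * b * c₁ / α₀) * ε)]
  · have hbound := drift_le_of_near_diagonal (H := H) (γ := γ) hb hB hα₀ hc₁0 hc₂ hZ hQ hRZQ hQε.le
    nlinarith [mul_le_mul_of_nonneg_right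
        (min_le_right (ℓ₀ * B * c₁) (b * c₁ / (α₀ * (c₂ + c₁)))) hF]

end Drift

section Lyapunov

variable {β lam lamV CV u u' : ℝ}

lemma lyapunov_absorb {F D C : ℝ} (hβ : 0 ≤ β) (hCV : 0 ≤ CV) (hβlam : 4 * β * CV ≤ lam)
    (hlamV : 0 ≤ lamV) (hu : 0 ≤ u) (hu' : 0 ≤ u') (hF : 0 ≤ F) (hD : D ≤ -lam * F + C) :
    (1 + β * u + β * u') * D - β * F * (lamV * (u + u') - 2 * CV)
      ≤ -(lam / 2 * (F * (1 + β * u + β * u'))) + C * (1 + β * u + β * u') := by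
  have hW : 0 ≤ β * u + β * u' := by positivity
  have hlam : 0 ≤ lam := by nlinarith [mul_nonneg hβ hCV]
  nlinarith [mul_le_mul_of_nonneg_left hD (by linarith : 0 ≤ 1 + β * u + β * u'),
    mul_nonneg (mul_nonneg hβ hF) (mul_nonneg hlamV (add_nonneg hu hu')),
    mul_nonneg (mul_nonneg hlam hF) hW, mul_le_mul_of_nonneg_right hβlam hF]

lemma outer_rate_mul_le (hβ : 0 ≤ β) (hlamV : 0 < lamV) (hCV : 0 ≤ CV)
    (h : 4 * CV ≤ lamV * (u + u')) :
    2 * β * CV / (1 + 4 * β * CV / lamV) * (1 + β * u + β * u')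
      ≤ β * (lamV * (u + u') - 2 * CV) := by
  have hpos : 0 < 1 + 4 * β * CV / lamV := by positivity
  have hgap : β * (lamV * (u + u') - 2 * CV) * (1 + 4 * β * CV / lamV)
      - 2 * β * CV * (1 + β * u + β * u')
      = β * (lamV * (u + u') - 4 * CV) * (1 + 2 * β * CV / lamV) := by
    field_simp
    ring
  rw [div_mul_eq_mul_div, div_le_iff₀ hpos]
  nlinarith [mul_nonneg (mul_nonneg hβ (sub_nonneg.2 h))
    (by positivity : 0 ≤ 1 + 2 * β * CV / lamV)]

end Lyapunov

lemma le_sSup_of_add_le {X : Type*} [PseudoMetricSpace X] [ProperSpace X] {V : X → ℝ}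
    (hV : ∀ p, 0 ≤ V p) {M : ℝ} (hM : IsBounded {p | V p ≤ M}) {r : X → X → ℝ}
    (hr : Continuous (uncurry r)) {p p' : X} (h : V p + V p' ≤ M) :
    r p p' ≤ sSup {s | ∃ p p', V p + V p' ≤ M ∧ s = r p p'} := by
  refine le_csSup ?_ ⟨p, p', h, rfl⟩
  refine ((hM.prod hM).isCompact_closure.bddAbove_image hr.continuousOn).mono ?_
  rintro _ ⟨q, q', hqq', rfl⟩
  exact ⟨(q, q'), subset_closure
    ⟨show V q ≤ M by linarith [hV q'], show V q' ≤ M by linarith [hV q]⟩, rfl⟩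

lemma exists_contraction_constants {b B α₀ γ ℓ₀ c₁ c₂ lamV CV : ℝ} (hb : 0 < b) (hB : 0 < B)
    (hα₀ : 0 < α₀) (hγ : γ ≠ 0) (hℓ₀ : 0 < ℓ₀) (hlamV : 0 < lamV) (hCV : 0 < CV)
    (hc₂ : c₂ = 2 / γ ^ 2 * ℓ₀ * B) (hc₁ : c₁ = c₂ * exp (-c₂ * ℓ₀)) {f g g' g'' : ℝ → ℝ}
    (hf : ∀ s, f s = 1 - exp (-c₂ * s) + c₁ * s) (hg : ∀ s, g s = f (min s ℓ₀))
    (hg' : ∀ s, g' s = if s ≤ ℓ₀ then c₂ * exp (-c₂ * s) + c₁ else 0)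
    (hg'' : ∀ s, g'' s = if s ≤ ℓ₀ then -(c₂ ^ 2) * exp (-c₂ * s) else 0) :
    ∃ β lamS CS : ℝ, β ∈ Ioc (0 : ℝ) 1 ∧ 0 < lamS ∧ 0 < CS ∧
      ∀ ε > (0 : ℝ), ∀ Z Q u u' H : ℝ, 0 ≤ Z → 0 ≤ Q → 0 ≤ u → 0 ≤ u' → (2 * ε ≤ Q → H = 1) →
        (ℓ₀ < α₀ * Z + Q → 4 * CV ≤ lamV * (u + u')) →
        (1 + β * u + β * u') * (g' (α₀ * Z + Q) * (-b * Z + B * Q)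
            + 2 * γ ^ 2 * g'' (α₀ * Z + Q) * H ^ 2)
          - β * g (α₀ * Z + Q) * (lamV * (u + u') - 2 * CV)
        ≤ -((if α₀ * Z + Q ≤ ℓ₀ then lamS else 2 * β * CV / (1 + 4 * β * CV / lamV))
              * (g (α₀ * Z + Q) * (1 + β * u + β * u')))
          + CS * ε * (1 + β * u + β * u') := by
  have hc₂0 : 0 < c₂ := by rw [hc₂]; positivity
  have hc₁0 : 0 < c₁ := by rw [hc₁]; positivity
  have hγc : γ ^ 2 * c₂ = 2 * ℓ₀ * B := by rw [hc₂]; field_simp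
  set lam := min (ℓ₀ * B * c₁) (b * c₁ / (α₀ * (c₂ + c₁)))
  have hlam : 0 < lam := lt_min (by positivity) (by positivity)
  set β := min 1 (lam / (4 * CV))
  have hβ : 0 < β := lt_min one_pos (by positivity)
  have hβlam : 4 * β * CV ≤ lam := by
    have := min_le_right 1 (lam / (4 * CV))
    rw [le_div_iff₀ (by positivity)] at this
    linarith
  refine ⟨β, lam / 2, 2 * B * (c₂ + c₁) + 2 * b * c₁ / α₀, ⟨hβ, min_le_left _ _⟩,
    by positivity, by positivity, ?_⟩
  intro ε hε Z Q u u' H hZ hQ hu hu' hH hout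
  simp only [hg', hg'', hg, hf]
  split_ifs with hR
  · rw [min_eq_left hR]
    exact lyapunov_absorb hβ.le hCV.le hβlam hlamV.le hu hu'
      (profile_nonneg hc₁0.le hc₂0.le (by positivity))
      (drift_le hb.le hB.le hα₀ hℓ₀.le hc₂0 hγc hc₁ hZ hQ rfl hR hε.le hH)
  · rw [not_le] at hR
    rw [min_eq_right hR.le]
    have hF := profile_nonneg hc₁0.le hc₂0.le hℓ₀.le (c₁ := c₁)
    have hrate := mul_le_mul_of_nonneg_right (outer_rate_mul_le hβ.le hlamV hCV.le (hout hR)) hF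
    have hCSε : 0 ≤ (2 * B * (c₂ + c₁) + 2 * b * c₁ / α₀) * ε * (1 + β * u + β * u') := by
      positivity
    nlinarith

/-- The constants `β, λ_*, C_*` depend only on `a, b, L, λ*_V, C*_V` and `ℓ₀`: they are
chosen before the dimension `d`, the Lyapunov function `V` and the cutoff `h_ε`. -/
theorem stmt_14 (a b L : ℝ) (ha : 0 ≤ a) (hb : 0 < b) (hL : 0 < L)
    (γ α₀ : ℝ) (hγ : γ = b / (a + b)) (hα₀ : α₀ = 2 + (1/b + 1/(a+b)) * L)
    (lamV CV : ℝ) (hlamV : 0 < lamV) (hCV : 0 < CV)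
    (ℓ₀ c₁ c₂ : ℝ)
    (hc₂ : c₂ = (2 / γ ^ 2) * ℓ₀ * ((α₀ + 1) * b / γ + L))
    (hc₁ : c₁ = c₂ * Real.exp (-c₂ * ℓ₀))
    (f g g' g'' : ℝ → ℝ)
    (hf : ∀ s, f s = 1 - Real.exp (-c₂ * s) + c₁ * s)
    (hg : ∀ s, g s = f (min s ℓ₀))
    (hg' : ∀ s, g' s = if s ≤ ℓ₀ then c₂ * Real.exp (-c₂ * s) + c₁ else 0)
    (hg'' : ∀ s, g'' s = if s ≤ ℓ₀ then -(c₂ ^ 2) * Real.exp (-c₂ * s) else 0) :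
    ∃ β lamS CS : ℝ, β ∈ Set.Ioc (0:ℝ) 1 ∧ 0 < lamS ∧ 0 < CS ∧
      ∀ d : ℕ, 1 ≤ d →
      ∀ V : Euc d × Euc d → ℝ,
        Continuous V → (∀ p, 1 ≤ V p) →
        (∀ R > (0:ℝ), IsBounded {p : Euc d × Euc d | V p ≤ R}) →
      ∀ r : (Euc d × Euc d) → (Euc d × Euc d) → ℝ,
        (∀ p p', r p p' = α₀ * ‖p.1 - p'.1‖ + ‖(p.1 - p'.1) + γ • (p.2 - p'.2)‖) →
        ℓ₀ = 1 + sSup {s : ℝ | ∃ p p', V p + V p' ≤ 4 * CV / lamV ∧ s = r p p'} →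
      ∀ ε > (0:ℝ), ∀ h : ℝ → ℝ,
        (∀ s, 0 ≤ s → h s ∈ Set.Icc (0:ℝ) 1) →
        (∀ s, 0 ≤ s → s ≤ ε → h s = 0) → (∀ s, 2 * ε ≤ s → h s = 1) →
      ∀ p p' : Euc d × Euc d,
        (1 + β * V p + β * V p') *
            (g' (r p p') * (((1 - α₀) * (b / γ - a) + L * (1 + γ)) * ‖p.1 - p'.1‖
                + ((α₀ + 1) * b / γ + L) * ‖(p.1 - p'.1) + γ • (p.2 - p'.2)‖)
              + 2 * γ ^ 2 * g'' (r p p') * (h ‖(p.1 - p'.1) + γ • (p.2 - p'.2)‖) ^ 2)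
          - β * g (r p p') * (lamV * (V p + V p') - 2 * CV)
        ≤ -((if r p p' ≤ ℓ₀ then lamS else 2 * β * CV / (1 + 4 * β * CV / lamV))
              * (g (r p p') * (1 + β * V p + β * V p')))
          + CS * ε * (1 + β * V p + β * V p') := by
  have hγ0 : 0 < γ := hγ ▸ div_pos hb (by linarith)
  have hα₀0 : 0 < α₀ := by
    rw [hα₀]
    have : 0 < a + b := by linarith
    positivity
  by_cases hℓ₀ : 0 < ℓ₀
  swap
  · -- the hypothesis on `ℓ₀` forces `1 ≤ ℓ₀`, so there is nothing to prove
    refine ⟨1, 1, 1, ⟨one_pos, le_rfl⟩, one_pos, one_pos, fun d _ V _ _ _ r hr hℓ => ?_⟩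
    have : 0 ≤ sSup {s : ℝ | ∃ p p', V p + V p' ≤ 4 * CV / lamV ∧ s = r p p'} :=
      Real.sSup_nonneg (by rintro _ ⟨p, p', -, rfl⟩; rw [hr]; positivity)
    exact absurd (by linarith) hℓ₀
  obtain ⟨β, lamS, CS, hβ, hlamS, hCS, hbound⟩ := exists_contraction_constants hb
    (by positivity) hα₀0 hγ0.ne' hℓ₀ hlamV hCV hc₂ hc₁ hf hg hg' hg''
  refine ⟨β, lamS, CS, hβ, hlamS, hCS, fun d _ V _ hV hVb r hr hℓ ε hε h _ _ hh1 p p' => ?_⟩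
  have hrc : Continuous (uncurry r) := by
    rw [show uncurry r = _ from funext fun w => hr w.1 w.2]
    fun_prop
  have hout : ℓ₀ < r p p' → 4 * CV ≤ lamV * (V p + V p') := fun hlt => by
    by_contra! hsmall
    have := le_sSup_of_add_le (p := p) (p' := p') (fun q => by linarith [hV q])
      (hVb (4 * CV / lamV) (by positivity)) hrc ((le_div_iff₀ hlamV).2 (by linarith))
    linarith
  rw [hr] at hout ⊢
  rw [kinetic_drift_coeff_eq ha hb hγ hα₀]
  exact hbound ε hε _ _ _ _ _ (norm_nonneg _) (norm_nonneg _) (by linarith [hV p])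
    (by linarith [hV p']) (hh1 _) hout
end

section
/- Set C := 4γL*_V(1 + c₂/c₁)·max((1+γ^{−1})/α₀, γ^{−1}). For every β ∈ (0,1], ε > 0, cutoff h_ε as in the context, and all (x,y), (x′,y′) ∈ ℝ^d×ℝ^d with q ≠ 0: 2βγ·g′₋(r)·h_ε(|q|)²·⟨q/|q|, ∇₂V(x′,y′) − ∇₂V(x,y)⟩ ≤ C·β^{1−η}·ρ_β((x,y),(x′,y′))·1_{r≤ℓ₀}. -/
open scoped RealInnerProductSpace
open Real Set Bornology

/-!
On `{r ≤ ℓ₀}` the profile satisfies `g'(r) r ≤ g(r)`, since `c s e^{-cs} ≤ 1 - e^{-cs}`. The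
Lipschitz bound on `∇₂V` together with `|z| + |v| ≤ max((1 + γ⁻¹)/α₀, γ⁻¹) r` bounds the inner
product by a multiple of `(V^η + V'^η) r`, and `β V^η = β^{1-η} (βV)^η ≤ β^{1-η} (1 + βV)` turns
the weights `V^η` into the weight `1 + βV + βV'` of `ρ_β`.
-/

lemma rpow_le_one_add {t η : ℝ} (ht : 0 ≤ t) (hη0 : 0 ≤ η) (hη1 : η ≤ 1) : t ^ η ≤ 1 + t := by
  rcases le_total t 1 with h | h
  · linarith [rpow_le_one ht h hη0]
  · linarith [rpow_le_self_of_one_le h hη1]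

lemma mul_rpow_le_rpow_one_sub_mul_one_add {β t η : ℝ} (hβ : 0 < β) (ht : 0 ≤ t) (hη0 : 0 ≤ η)
    (hη1 : η ≤ 1) : β * t ^ η ≤ β ^ (1 - η) * (1 + β * t) := by
  have hsplit : β * t ^ η = β ^ (1 - η) * (β * t) ^ η := by
    rw [mul_rpow hβ.le ht, ← mul_assoc, ← rpow_add hβ, sub_add_cancel, rpow_one]
  rw [hsplit]
  gcongr
  exact rpow_le_one_add (by positivity) hη0 hη1

lemma mul_exp_neg_le_one_sub_exp_neg (x : ℝ) : x * exp (-x) ≤ 1 - exp (-x) := by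
  have h := mul_le_mul_of_nonneg_right (add_one_le_exp x) (exp_pos (-x)).le
  rw [← exp_add, add_neg_cancel, exp_zero] at h
  linarith

lemma norm_add_norm_le_max_mul {E : Type*} [SeminormedAddCommGroup E] [NormedSpace ℝ E]
    {γ α : ℝ} (hγ : 0 < γ) (hα : 0 < α) (z v : E) :
    ‖z‖ + ‖v‖ ≤ max ((1 + γ⁻¹) / α) γ⁻¹ * (α * ‖z‖ + ‖z + γ • v‖) := by
  set M := max ((1 + γ⁻¹) / α) γ⁻¹
  have hv : γ * ‖v‖ ≤ ‖z + γ • v‖ + ‖z‖ := by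
    calc γ * ‖v‖ = ‖(z + γ • v) - z‖ := by
          rw [add_sub_cancel_left, norm_smul, Real.norm_of_nonneg hγ.le]
      _ ≤ ‖z + γ • v‖ + ‖z‖ := norm_sub_le _ _
  have hM₁ : 1 + γ⁻¹ ≤ M * α := (div_le_iff₀ hα).1 (le_max_left _ _)
  have hM₂ : γ⁻¹ ≤ M := le_max_right _ _
  calc ‖z‖ + ‖v‖ ≤ ‖z‖ + γ⁻¹ * (‖z + γ • v‖ + ‖z‖) := by
        gcongr
        rwa [inv_mul_eq_div, le_div_iff₀' hγ]
    _ = (1 + γ⁻¹) * ‖z‖ + γ⁻¹ * ‖z + γ • v‖ := by ring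
    _ ≤ M * α * ‖z‖ + M * ‖z + γ • v‖ := by gcongr
    _ = M * (α * ‖z‖ + ‖z + γ • v‖) := by ring

lemma inner_inv_norm_smul_le_norm {F : Type*} [NormedAddCommGroup F] [InnerProductSpace ℝ F]
    (q w : F) : ⟪‖q‖⁻¹ • q, w⟫ ≤ ‖w‖ := by
  rcases eq_or_ne q 0 with rfl | hq
  · simp
  · have hunit : ‖‖q‖⁻¹ • q‖ = 1 := by
      rw [norm_smul, norm_inv, norm_norm, inv_mul_cancel₀ (norm_ne_zero_iff.2 hq)]
    simpa [hunit] using real_inner_le_norm (‖q‖⁻¹ • q) w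

lemma deriv_mul_le_profile (c₁ c₂ s : ℝ) :
    (c₂ * exp (-c₂ * s) + c₁) * s ≤ 1 - exp (-c₂ * s) + c₁ * s := by
  rw [neg_mul]
  linarith [mul_exp_neg_le_one_sub_exp_neg (c₂ * s)]

section Drift

variable {F : Type*} [NormedAddCommGroup F] [InnerProductSpace ℝ F]
  {V : F × F → ℝ} {D : F × F → F} {K η γ α β : ℝ}

lemma smul_inner_sub_le_of_lipschitz (hV : ∀ p, 1 ≤ V p) (hK : 0 ≤ K)
    (hη0 : 0 ≤ η) (hη1 : η ≤ 1)
    (hD : ∀ p p', ‖D p - D p'‖ ≤ K * (V p ^ η + V p' ^ η) * (‖p.1 - p'.1‖ + ‖p.2 - p'.2‖))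
    (hγ : 0 < γ) (hα : 0 < α) (hβ : 0 < β) (p p' : F × F) :
    β * ⟪‖(p.1 - p'.1) + γ • (p.2 - p'.2)‖⁻¹ • ((p.1 - p'.1) + γ • (p.2 - p'.2)), D p' - D p⟫ ≤
      2 * K * max ((1 + γ⁻¹) / α) γ⁻¹ * β ^ (1 - η) * (1 + β * V p + β * V p') *
        (α * ‖p.1 - p'.1‖ + ‖(p.1 - p'.1) + γ • (p.2 - p'.2)‖) := by
  set M := max ((1 + γ⁻¹) / α) γ⁻¹
  set r := α * ‖p.1 - p'.1‖ + ‖(p.1 - p'.1) + γ • (p.2 - p'.2)‖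
  have hVη : ∀ p, 0 ≤ V p ^ η := fun p ↦ rpow_nonneg (zero_le_one.trans (hV p)) η
  have hM : 0 ≤ M := (inv_pos.2 hγ).le.trans (le_max_right _ _)
  have hweights : β * (V p ^ η + V p' ^ η) ≤ 2 * β ^ (1 - η) * (1 + β * V p + β * V p') := by
    have h := mul_rpow_le_rpow_one_sub_mul_one_add hβ (zero_le_one.trans (hV p)) hη0 hη1
    have h' := mul_rpow_le_rpow_one_sub_mul_one_add hβ (zero_le_one.trans (hV p')) hη0 hη1
    have hT : 0 ≤ β ^ (1 - η) * (β * V p + β * V p') :=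
      mul_nonneg (rpow_nonneg hβ.le _) (by nlinarith [hV p, hV p'])
    linarith
  calc β * ⟪_, D p' - D p⟫ ≤ β * ‖D p - D p'‖ := by
        rw [norm_sub_rev]
        gcongr
        exact inner_inv_norm_smul_le_norm _ _
    _ ≤ β * (K * (V p ^ η + V p' ^ η) * (M * r)) := by
        have := hVη p; have := hVη p'
        gcongr
        exact (hD p p').trans (by gcongr; exact norm_add_norm_le_max_mul hγ hα _ _)
    _ = K * M * r * (β * (V p ^ η + V p' ^ η)) := by ring
    _ ≤ K * M * r * (2 * β ^ (1 - η) * (1 + β * V p + β * V p')) := by gcongr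
    _ = 2 * K * M * β ^ (1 - η) * (1 + β * V p + β * V p') * r := by ring

lemma drift_term_le (hV : ∀ p, 1 ≤ V p) (hK : 0 ≤ K) (hη0 : 0 ≤ η) (hη1 : η ≤ 1)
    (hD : ∀ p p', ‖D p - D p'‖ ≤ K * (V p ^ η + V p' ^ η) * (‖p.1 - p'.1‖ + ‖p.2 - p'.2‖))
    (hγ : 0 < γ) (hα : 0 < α) (hβ : 0 < β) {G' G P C : ℝ} (hG' : 0 ≤ G') (hP : P ∈ Icc 0 1)
    (hC : 4 * γ * K * max ((1 + γ⁻¹) / α) γ⁻¹ ≤ C) (p p' : F × F)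
    (hprofile : G' * (α * ‖p.1 - p'.1‖ + ‖(p.1 - p'.1) + γ • (p.2 - p'.2)‖) ≤ G) :
    2 * β * γ * G' * P *
        ⟪‖(p.1 - p'.1) + γ • (p.2 - p'.2)‖⁻¹ • ((p.1 - p'.1) + γ • (p.2 - p'.2)), D p' - D p⟫ ≤
      C * β ^ (1 - η) * (G * (1 + β * V p + β * V p')) := by
  set q := (p.1 - p'.1) + γ • (p.2 - p'.2)
  set r := α * ‖p.1 - p'.1‖ + ‖q‖
  set M := max ((1 + γ⁻¹) / α) γ⁻¹
  set T := 1 + β * V p + β * V p'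
  have hT : 0 ≤ T := by nlinarith [hV p, hV p']
  have hB : 0 ≤ β ^ (1 - η) := rpow_nonneg hβ.le _
  have hr : 0 ≤ r := by positivity
  have hGP0 : 0 ≤ G' * P := mul_nonneg hG' hP.1
  have hGPr : G' * P * r ≤ G :=
    (mul_le_mul_of_nonneg_right (mul_le_of_le_one_right hG' hP.2) hr).trans hprofile
  have hM : 0 ≤ M := (inv_pos.2 hγ).le.trans (le_max_right _ _)
  have hC0 : 0 ≤ C := le_trans (by positivity) hC
  calc 2 * β * γ * G' * P * ⟪‖q‖⁻¹ • q, D p' - D p⟫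
      = 2 * γ * (G' * P) * (β * ⟪‖q‖⁻¹ • q, D p' - D p⟫) := by ring
    _ ≤ 2 * γ * (G' * P) * (2 * K * M * β ^ (1 - η) * T * r) := by
        have hdrift := smul_inner_sub_le_of_lipschitz hV hK hη0 hη1 hD hγ hα hβ p p'
        gcongr
    _ = 4 * γ * K * M * (β ^ (1 - η) * T) * (G' * P * r) := by ring
    _ ≤ C * (β ^ (1 - η) * T) * G := by gcongr
    _ = C * β ^ (1 - η) * (G * T) := by ring

end Drift

theorem stmt_15_general (d : ℕ) (a b L : ℝ) (ha : 0 ≤ a) (hb : 0 < b) (hL : 0 < L)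
    (γ α₀ : ℝ) (hγ : γ = b / (a + b)) (hα₀ : α₀ = 2 + (1/b + 1/(a+b)) * L)
    (V : Euc d × Euc d → ℝ) (hV1 : ∀ p, 1 ≤ V p)
    (lamV CV : ℝ)
    (D₂V : Euc d × Euc d → Euc d)
    (LsV η : ℝ) (hLsV : 0 < LsV) (hη : η ∈ Set.Ico (0:ℝ) 1)
    (hLip : ∀ p p' : Euc d × Euc d,
      ‖D₂V p - D₂V p'‖ ≤ LsV * (V p ^ η + V p' ^ η) * (‖p.1 - p'.1‖ + ‖p.2 - p'.2‖))
    (r : (Euc d × Euc d) → (Euc d × Euc d) → ℝ)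
    (hr : ∀ p p', r p p' = α₀ * ‖p.1 - p'.1‖ + ‖(p.1 - p'.1) + γ • (p.2 - p'.2)‖)
    (ℓ₀ c₁ c₂ : ℝ)
    (hℓ₀ : ℓ₀ = 1 + sSup {s : ℝ | ∃ p p', V p + V p' ≤ 4 * CV / lamV ∧ s = r p p'})
    (hc₂ : c₂ = (2 / γ ^ 2) * ℓ₀ * ((α₀ + 1) * b / γ + L))
    (hc₁ : c₁ = c₂ * Real.exp (-c₂ * ℓ₀))
    (f g g' : ℝ → ℝ)
    (hf : ∀ s, f s = 1 - Real.exp (-c₂ * s) + c₁ * s)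
    (hg : ∀ s, g s = f (min s ℓ₀))
    (hg' : ∀ s, g' s = if s ≤ ℓ₀ then c₂ * Real.exp (-c₂ * s) + c₁ else 0)
    (C : ℝ) (hC : C = 4 * γ * LsV * (1 + c₂ / c₁) * max ((1 + γ⁻¹) / α₀) γ⁻¹) :
    ∀ β ∈ Set.Ioc (0:ℝ) 1, ∀ ε > (0:ℝ), ∀ h : ℝ → ℝ,
      (∀ s, 0 ≤ s → h s ∈ Set.Icc (0:ℝ) 1) →
      (∀ s, 0 ≤ s → s ≤ ε → h s = 0) → (∀ s, 2 * ε ≤ s → h s = 1) →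
      ∀ p p' : Euc d × Euc d, (p.1 - p'.1) + γ • (p.2 - p'.2) ≠ 0 →
        2 * β * γ * g' (r p p') * (h ‖(p.1 - p'.1) + γ • (p.2 - p'.2)‖) ^ 2 *
            ⟪(‖(p.1 - p'.1) + γ • (p.2 - p'.2)‖⁻¹) • ((p.1 - p'.1) + γ • (p.2 - p'.2)),
              D₂V p' - D₂V p⟫
          ≤ if r p p' ≤ ℓ₀ then
              C * β ^ (1 - η) * (g (r p p') * (1 + β * V p + β * V p'))
            else 0 := by
  intro β hβ ε _ h hh _ _ p p' _
  have hγ0 : 0 < γ := by rw [hγ]; positivity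
  have hα₀0 : 0 < α₀ := by rw [hα₀]; positivity
  have hℓ₀0 : 0 ≤ ℓ₀ := by
    rw [hℓ₀]
    exact add_nonneg zero_le_one
      (Real.sSup_nonneg (by rintro _ ⟨u, u', -, rfl⟩; rw [hr]; positivity))
  have hc₂0 : 0 ≤ c₂ := by rw [hc₂]; positivity
  have hc₁0 : 0 ≤ c₁ := by rw [hc₁]; positivity
  split_ifs with hR
  swap; · simp [hg', hR]
  have hg'R : g' (r p p') = c₂ * exp (-c₂ * r p p') + c₁ := by rw [hg', if_pos hR]
  have hprofile : g' (r p p') * r p p' ≤ g (r p p') := by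
    rw [hg'R, hg, min_eq_left hR, hf]
    exact deriv_mul_le_profile c₁ c₂ _
  have hC' : 4 * γ * LsV * max ((1 + γ⁻¹) / α₀) γ⁻¹ ≤ C := by
    rw [hC]
    refine mul_le_mul_of_nonneg_right (le_mul_of_one_le_right (by positivity) ?_) ?_
    · exact le_add_of_nonneg_right (div_nonneg hc₂0 hc₁0)
    · exact (inv_pos.2 hγ0).le.trans (le_max_right _ _)
  have hcut := hh ‖(p.1 - p'.1) + γ • (p.2 - p'.2)‖ (norm_nonneg _)
  have hg'0 : 0 ≤ g' (r p p') := by rw [hg'R]; positivity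
  rw [hr] at hprofile hg'0 ⊢
  exact drift_term_le hV1 hLsV.le hη.1 hη.2.le hLip hγ0 hα₀0 hβ.1 hg'0
    ⟨sq_nonneg _, pow_le_one₀ hcut.1 hcut.2⟩ hC' p p' hprofile

theorem stmt_15 (d : ℕ) (hd : 1 ≤ d) (a b L : ℝ) (ha : 0 ≤ a) (hb : 0 < b) (hL : 0 < L)
    (γ α₀ : ℝ) (hγ : γ = b / (a + b)) (hα₀ : α₀ = 2 + (1/b + 1/(a+b)) * L)
    (V : Euc d × Euc d → ℝ) (hVcont : Continuous V) (hV1 : ∀ p, 1 ≤ V p)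
    (hVsub : ∀ R > (0:ℝ), IsBounded {p : Euc d × Euc d | V p ≤ R})
    (lamV CV : ℝ) (hlamV : 0 < lamV) (hCV : 0 < CV)
    (D₂V : Euc d × Euc d → Euc d)
    (hD₂V : ∀ x y : Euc d, HasGradientAt (fun y' => V (x, y')) (D₂V (x, y)) y)
    (LsV η : ℝ) (hLsV : 0 < LsV) (hη : η ∈ Set.Ico (0:ℝ) 1)
    (hLip : ∀ p p' : Euc d × Euc d,
      ‖D₂V p - D₂V p'‖ ≤ LsV * (V p ^ η + V p' ^ η) * (‖p.1 - p'.1‖ + ‖p.2 - p'.2‖))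
    (r : (Euc d × Euc d) → (Euc d × Euc d) → ℝ)
    (hr : ∀ p p', r p p' = α₀ * ‖p.1 - p'.1‖ + ‖(p.1 - p'.1) + γ • (p.2 - p'.2)‖)
    (ℓ₀ c₁ c₂ : ℝ)
    (hℓ₀ : ℓ₀ = 1 + sSup {s : ℝ | ∃ p p', V p + V p' ≤ 4 * CV / lamV ∧ s = r p p'})
    (hc₂ : c₂ = (2 / γ ^ 2) * ℓ₀ * ((α₀ + 1) * b / γ + L))
    (hc₁ : c₁ = c₂ * Real.exp (-c₂ * ℓ₀))
    (f g g' : ℝ → ℝ)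
    (hf : ∀ s, f s = 1 - Real.exp (-c₂ * s) + c₁ * s)
    (hg : ∀ s, g s = f (min s ℓ₀))
    (hg' : ∀ s, g' s = if s ≤ ℓ₀ then c₂ * Real.exp (-c₂ * s) + c₁ else 0)
    (C : ℝ) (hC : C = 4 * γ * LsV * (1 + c₂ / c₁) * max ((1 + γ⁻¹) / α₀) γ⁻¹) :
    ∀ β ∈ Set.Ioc (0:ℝ) 1, ∀ ε > (0:ℝ), ∀ h : ℝ → ℝ,
      (∀ s, 0 ≤ s → h s ∈ Set.Icc (0:ℝ) 1) →
      (∀ s, 0 ≤ s → s ≤ ε → h s = 0) → (∀ s, 2 * ε ≤ s → h s = 1) →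
      ∀ p p' : Euc d × Euc d, (p.1 - p'.1) + γ • (p.2 - p'.2) ≠ 0 →
        2 * β * γ * g' (r p p') * (h ‖(p.1 - p'.1) + γ • (p.2 - p'.2)‖) ^ 2 *
            ⟪(‖(p.1 - p'.1) + γ • (p.2 - p'.2)‖⁻¹) • ((p.1 - p'.1) + γ • (p.2 - p'.2)),
              D₂V p' - D₂V p⟫
          ≤ if r p p' ≤ ℓ₀ then
              C * β ^ (1 - η) * (g (r p p') * (1 + β * V p + β * V p'))
            else 0 :=
  stmt_15_general d a b L ha hb hL γ α₀ hγ hα₀ V hV1 lamV CV D₂V LsV η hLsV hη hLip r hr ℓ₀ c₁ c₂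
    hℓ₀ hc₂ hc₁ f g g' hf hg hg' C hC
end

section
/- For all x, y ∈ ℝ^d: ⟨x, ∇U(x)⟩ + |y|² + λ⟨x,y⟩ ≥ λ_*·V_λ(x,y) − λ₂ + λ₂·min U − C⋆. -/
/-!
Expanding `‖x + y‖²`, `λ_* V_λ(x, y)` is `λ_* (1 + U x - min U)` plus `λ_*/4` times the quadratic
form `(1 - λ)‖x‖² + 2‖y‖² + 2⟪x, y⟫`. The first part is at most `λ₂ (1 + U x - min U)` since
`λ_* ≤ λ₂`, and the drift condition absorbs `λ₂ U x`. For the second, `λ_*/4 ≤ κ`, and the choice of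
`κ` makes `λ₁‖x‖² + ‖y‖² + λ⟪x, y⟫ - k ((1 - λ)‖x‖² + 2‖y‖² + 2⟪x, y⟫)`, for `0 ≤ k ≤ κ`, a form
with nonnegative diagonal coefficients and nonpositive discriminant, hence nonnegative by
Cauchy–Schwarz.
-/

open scoped RealInnerProductSpace
open Real Set

/-- `κ := min( (4λ₁−λ²)/(8(7/4−λ)), 3(4λ₁−λ²)/(10(λ²+4λ₁)) )`. -/
noncomputable def kappaConst (lam1 lam : ℝ) : ℝ :=
  min ((4 * lam1 - lam ^ 2) / (8 * (7/4 - lam)))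
    (3 * (4 * lam1 - lam ^ 2) / (10 * (lam ^ 2 + 4 * lam1)))

/-- `λ_* := min(4κ, λ₂)`. -/
noncomputable def lamStarConst (lam1 lam2 lam : ℝ) : ℝ :=
  min (4 * kappaConst lam1 lam) lam2

/-- `V_λ(x,y) := 1 + U(x) − m + (1/4)(|x+y|² + |y|² − λ|x|²)`, where `m = min U`. -/
noncomputable def Vlam {d : ℕ} (U : EuclideanSpace ℝ (Fin d) → ℝ) (m lam : ℝ)
    (x y : EuclideanSpace ℝ (Fin d)) : ℝ :=
  1 + U x - m + (1/4) * (‖x + y‖ ^ 2 + ‖y‖ ^ 2 - lam * ‖x‖ ^ 2)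

theorem quadratic_form_nonneg_of_sq_le {E : Type*} [NormedAddCommGroup E] [InnerProductSpace ℝ E]
    {a b c : ℝ} (ha : 0 ≤ a) (hb : 0 ≤ b) (hc : c ^ 2 ≤ 4 * a * b) (x y : E) :
    0 ≤ a * ‖x‖ ^ 2 + b * ‖y‖ ^ 2 + c * ⟪x, y⟫ := by
  have hcs : |⟪x, y⟫| ≤ ‖x‖ * ‖y‖ := abs_real_inner_le_norm x y
  have hamgm : |c| * (‖x‖ * ‖y‖) ≤ a * ‖x‖ ^ 2 + b * ‖y‖ ^ 2 := by
    apply abs_le_of_sq_le_sq' _ (by positivity) |>.2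
    nlinarith [sq_nonneg (a * ‖x‖ ^ 2 - b * ‖y‖ ^ 2), sq_abs c,
      mul_nonneg (sub_nonneg.2 hc) (sq_nonneg (‖x‖ * ‖y‖))]
  have hcross : |c * ⟪x, y⟫| ≤ |c| * (‖x‖ * ‖y‖) := by
    rw [abs_mul]; gcongr
  linarith [neg_abs_le (c * ⟪x, y⟫)]

section Kappa

variable {lam1 lam : ℝ}

theorem kappaConst_pos (hlam : lam < 7/4) (hsq : lam ^ 2 < 4 * lam1) : 0 < kappaConst lam1 lam :=
  lt_min (div_pos (by linarith) (by linarith)) (div_pos (by linarith) (by nlinarith))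

theorem mul_quadratic_le_of_le_kappaConst {E : Type*} [NormedAddCommGroup E] [InnerProductSpace ℝ E] {k : ℝ}
    (hlam : lam < 1/4) (hsq : lam ^ 2 < 4 * lam1)
    (hk0 : 0 ≤ k) (hk : k ≤ kappaConst lam1 lam) (x y : E) :
    k * ((1 - lam) * ‖x‖ ^ 2 + 2 * ‖y‖ ^ 2 + 2 * ⟪x, y⟫)
      ≤ lam1 * ‖x‖ ^ 2 + ‖y‖ ^ 2 + lam * ⟪x, y⟫ := by
  have hk1 : k * (14 - 8 * lam) ≤ 4 * lam1 - lam ^ 2 := by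
    have := (le_div_iff₀ (by linarith)).1 (hk.trans (min_le_left _ _))
    linarith
  have hk2 : 10 * k * (lam ^ 2 + 4 * lam1) ≤ 3 * (4 * lam1 - lam ^ 2) := by
    have := (le_div_iff₀ (by nlinarith)).1 (hk.trans (min_le_right _ _))
    linarith
  have hb : 0 ≤ 1 - 2 * k := by nlinarith
  have hdisc : (lam - 2 * k) ^ 2 ≤ 4 * (lam1 - k * (1 - lam)) * (1 - 2 * k) := by
    rcases le_or_gt lam1 (5/4) with h | h <;> nlinarith [mul_nonneg hk0 hk0]
  have ha : 0 ≤ lam1 - k * (1 - lam) := by nlinarith [sq_nonneg (lam - 2 * k)]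
  linarith [quadratic_form_nonneg_of_sq_le ha hb hdisc x y]

end Kappa

theorem lamStarConst_pos {lam1 lam2 lam : ℝ} (hk : 0 < kappaConst lam1 lam) (hlam2 : 0 < lam2) :
    0 < lamStarConst lam1 lam2 lam :=
  lt_min (by linarith) hlam2

theorem Vlam_eq {d : ℕ} (U : EuclideanSpace ℝ (Fin d) → ℝ) (m lam : ℝ)
    (x y : EuclideanSpace ℝ (Fin d)) :
    Vlam U m lam x y
      = 1 + U x - m + (1/4) * ((1 - lam) * ‖x‖ ^ 2 + 2 * ‖y‖ ^ 2 + 2 * ⟪x, y⟫) := by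
  rw [Vlam, norm_add_sq_real]
  ring

theorem stmt_17_general (d : ℕ)
    (U : EuclideanSpace ℝ (Fin d) → ℝ)
    (x₀ : EuclideanSpace ℝ (Fin d)) (hx₀ : ∀ x, U x₀ ≤ U x)
    (lam1 lam2 Cst : ℝ) (hlam1 : 0 < lam1) (hlam2 : 0 < lam2)
    (hgrad : ∀ x, lam1 * ‖x‖ ^ 2 + lam2 * U x - Cst ≤ ⟪x, gradient U x⟫)
    (lam : ℝ) (hlam : lam ∈ Set.Ioo (0:ℝ) (min (2 * Real.sqrt lam1) (1/4))) :
    ∀ x y : EuclideanSpace ℝ (Fin d),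
      lamStarConst lam1 lam2 lam * Vlam U (U x₀) lam x y - lam2 + lam2 * U x₀ - Cst
        ≤ ⟪x, gradient U x⟫ + ‖y‖ ^ 2 + lam * ⟪x, y⟫ := by
  obtain ⟨hlam0, hlam_lt⟩ := hlam
  have hlam4 : lam < 1/4 := hlam_lt.trans_le (min_le_right _ _)
  have hsq : lam ^ 2 < 4 * lam1 := by
    nlinarith [hlam_lt.trans_le (min_le_left _ _), Real.sq_sqrt hlam1.le, Real.sqrt_nonneg lam1]
  set ls := lamStarConst lam1 lam2 lam
  have hls0 : 0 < ls := lamStarConst_pos (kappaConst_pos (by linarith) hsq) hlam2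
  have hls_le : ls ≤ 4 * kappaConst lam1 lam := min_le_left _ _
  intro x y
  have hquad := mul_quadratic_le_of_le_kappaConst hlam4 hsq (by positivity : 0 ≤ ls / 4)
    (by linarith) x y
  have hpot : ls * (1 + U x - U x₀) ≤ lam2 * (1 + U x - U x₀) :=
    mul_le_mul_of_nonneg_right (min_le_right _ _) (by linarith [hx₀ x])
  rw [Vlam_eq]
  linear_combination hgrad x + hpot + hquad

theorem stmt_17 (d : ℕ) (hd : 1 ≤ d)
    (U : EuclideanSpace ℝ (Fin d) → ℝ) (hU : ContDiff ℝ 1 U)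
    (hcoer : ∀ M : ℝ, ∃ R : ℝ, ∀ x, R ≤ ‖x‖ → M ≤ U x)
    (x₀ : EuclideanSpace ℝ (Fin d)) (hx₀ : ∀ x, U x₀ ≤ U x)
    (lam1 lam2 Cst : ℝ) (hlam1 : 0 < lam1) (hlam2 : 0 < lam2) (hCst : 0 < Cst)
    (hgrad : ∀ x, lam1 * ‖x‖ ^ 2 + lam2 * U x - Cst ≤ ⟪x, gradient U x⟫)
    (lam : ℝ) (hlam : lam ∈ Set.Ioo (0:ℝ) (min (2 * Real.sqrt lam1) (1/4))) :
    ∀ x y : EuclideanSpace ℝ (Fin d),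
      lamStarConst lam1 lam2 lam * Vlam U (U x₀) lam x y - lam2 + lam2 * U x₀ - Cst
        ≤ ⟪x, gradient U x⟫ + ‖y‖ ^ 2 + lam * ⟪x, y⟫ :=
  stmt_17_general d U x₀ hx₀ lam1 lam2 Cst hlam1 hlam2 hgrad lam hlam
end
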